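/- arXiv:1209.1507 — 12 statements merged into one kernel-verified Lean document; each statement's English description precedes it below -/
import Mathlib

section
/- Let X be a connected closed smooth d-dimensional manifold and let r ≥ 1 be the smallest positive integer with H^r(X; Z/2) ≠ 0 (reduced). Suppose ξ is a real vector bundle over X and k ≤ charrank_X(ξ) is an integer such that every monomial w_{i_1}(ξ)···w_{i_r}(ξ) with all 0 ≤ i_t ≤ k and total degree d vanishes. Then the Z/2-cup-length of X satisfies cup(X) ≤ 1 + (d − k − 1)/r. -/
/-! An abstract framework for the mod-2 cohomology ring of a connected finite
CW-complex, Stiefel–Whitney classes of real vector bundles, characteristic rank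
and cup-length, following Naolekar–Thakur,
"Note on the characteristic rank of vector bundles". -/

variable (A : Type) [CommRing A] [Algebra (ZMod 2) A]

/-- The mod 2 cohomology of a connected finite complex: a graded
`ZMod 2`-algebra `A` with graded pieces `H i`. -/
structure CohomSpace where
  /-- dimension of the complex -/
  dim : ℕ
  /-- the graded pieces `H^i(X; Z/2)` -/
  H : ℕ → Submodule (ZMod 2) A
  /-- connectedness: `H 0` is spanned by `1` -/
  h0 : H 0 = Submodule.span (ZMod 2) {(1 : A)}
  /-- cup products respect the grading -/
  mul_mem : ∀ {i j : ℕ} {x y : A}, x ∈ H i → y ∈ H j → x * y ∈ H (i + j)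
  /-- cohomology vanishes above the dimension -/
  top : ∀ i, dim < i → H i = ⊥
  /-- the graded pieces are independent -/
  indep : iSupIndep H

variable {A}

/-- `x` is a polynomial in the classes `w i`. -/
def IsPolyIn (w : ℕ → A) (x : A) : Prop :=
  x ∈ Algebra.adjoin (ZMod 2) (Set.range w)

/-- The characteristic rank of a vector bundle with total Stiefel–Whitney
class `w` over a space `X`: the largest `k ≤ dim X` such that every class of
degree `≤ k` is a polynomial in the `w i`. -/
noncomputable def charrank (X : CohomSpace A) (w : ℕ → A) : ℕ :=
  sSup {k | k ≤ X.dim ∧ ∀ j ≤ k, ∀ x ∈ X.H j, IsPolyIn w x}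

/-- The `Z/2` cup-length: the largest number of positive-degree classes with
nonzero product. -/
noncomputable def cupLength (X : CohomSpace A) : ℕ :=
  sSup {t | ∃ x : Fin t → A, (∀ i, ∃ j, 1 ≤ j ∧ x i ∈ X.H j) ∧ ∏ i, x i ≠ 0}

/-- The isomorphism classes of real vector bundles on `X`, with their
Stiefel–Whitney classes and Whitney sum (satisfying the Whitney sum formula). -/
structure BundleTheory (X : CohomSpace A) where
  /-- the isomorphism classes of real vector bundles on `X` -/
  VB : Type
  nonempty : Nonempty VB
  /-- Stiefel–Whitney classes -/
  w : VB → ℕ → A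
  w_mem : ∀ ξ i, w ξ i ∈ X.H i
  w_zero : ∀ ξ, w ξ 0 = 1
  /-- Whitney sum -/
  sum : VB → VB → VB
  w_sum : ∀ ξ η n, w (sum ξ η) n = ∑ i ∈ Finset.range (n + 1), w ξ i * w η (n - i)

/-- The upper characteristic rank of `X`. -/
noncomputable def ucharrank (X : CohomSpace A) (B : BundleTheory X) : ℕ :=
  sSup (Set.range fun ξ : B.VB => charrank X (B.w ξ))

/-- `r` is the least positive degree with nonvanishing reduced mod 2
cohomology (the number `r_X`). -/
def IsRX (X : CohomSpace A) (r : ℕ) : Prop :=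
  1 ≤ r ∧ X.H r ≠ ⊥ ∧ ∀ j, 1 ≤ j → j < r → X.H j = ⊥

/-- `Z/2`-Poincaré duality, satisfied by closed manifolds. -/
def PoincareDual (X : CohomSpace A) : Prop :=
  ∀ j, j ≤ X.dim → ∀ x ∈ X.H j, x ≠ 0 → ∃ y ∈ X.H (X.dim - j), x * y ≠ 0

lemma aux_monomial_mem (X : CohomSpace A) (w : ℕ → A) (hw : ∀ i, w i ∈ X.H i)
    (s : Multiset ℕ) : (s.map w).prod ∈ X.H s.sum := by
  induction s using Multiset.induction with
  | empty => simpa [X.h0] using Submodule.mem_span_singleton_self (1 : A)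
  | cons a s ih =>
    simp only [Multiset.map_cons, Multiset.prod_cons, Multiset.sum_cons]
    exact X.mul_mem (hw a) ih

lemma aux_prod_mem_graded {G : ℕ → Submodule (ZMod 2) A}
    (h1 : (1 : A) ∈ G 0)
    (hmul : ∀ {a b : ℕ} {z u : A}, z ∈ G a → u ∈ G b → z * u ∈ G (a + b))
    {ι : Type} (s : Finset ι) (x : ι → A) (j : ι → ℕ)
    (h : ∀ i ∈ s, x i ∈ G (j i)) :
    (∏ i ∈ s, x i) ∈ G (∑ i ∈ s, j i) := by
  induction s using Finset.cons_induction with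
  | empty => simpa using h1
  | cons a s ha ih =>
    rw [Finset.prod_cons, Finset.sum_cons]
    exact hmul (h a (Finset.mem_cons_self a s)) (ih fun i hi => h i (Finset.mem_cons_of_mem hi))

lemma aux_mem_span_monomials (X : CohomSpace A) (w : ℕ → A) (hw : ∀ i, w i ∈ X.H i)
    {j : ℕ} {x : A} (hx : x ∈ X.H j) (hp : IsPolyIn w x) :
    x ∈ Submodule.span (ZMod 2)
      {m | ∃ s : Multiset ℕ, s.sum = j ∧ m = (s.map w).prod} := by
  classical
  set Q : ℕ → Submodule (ZMod 2) A := fun n =>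
    Submodule.span (ZMod 2) {m | ∃ s : Multiset ℕ, s.sum = n ∧ m = (s.map w).prod} with hQ
  have hQH : ∀ n, Q n ≤ X.H n := by
    intro n
    rw [hQ]
    refine Submodule.span_le.mpr ?_
    rintro m ⟨s, rfl, rfl⟩
    exact aux_monomial_mem X w hw s
  have hx' : x ∈ ⨆ i, Q i := by
    have hx2 : x ∈ Submodule.span (ZMod 2) ((Submonoid.closure (Set.range w) : Submonoid A) : Set A) := by
      rw [← Algebra.adjoin_eq_span]; exact hp
    refine Submodule.span_le.mpr ?_ hx2
    intro m hm
    obtain ⟨l, hl, rfl⟩ := Submonoid.exists_list_of_mem_closure hm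
    have hex : ∀ l : List A, (∀ y ∈ l, y ∈ Set.range w) →
        ∃ s : Multiset ℕ, (s.map w).prod = l.prod := by
      intro l
      induction l with
      | nil => exact fun _ => ⟨0, by simp⟩
      | cons a l ih =>
        intro h
        obtain ⟨i, hi⟩ := h a (by simp)
        obtain ⟨s, hs⟩ := ih fun y hy => h y (by simp [hy])
        exact ⟨i ::ₘ s, by simp [hs, hi]⟩
    obtain ⟨s, hs⟩ := hex l hl
    exact Submodule.mem_iSup_of_mem s.sum (Submodule.subset_span ⟨s, rfl, hs.symm⟩)
  obtain ⟨f, hf, hfx⟩ := (Submodule.mem_iSup_iff_exists_finsupp Q x).mp hx'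
  have key : x - f j ∈ ⨆ (i) (_ : i ≠ j), X.H i := by
    have hxf : x - f j = ∑ i ∈ f.support.erase j, f i := by
      rw [← hfx, Finsupp.sum]
      by_cases hj : j ∈ f.support
      · rw [← Finset.add_sum_erase _ _ hj]; ring
      · rw [Finsupp.notMem_support_iff.mp hj, Finset.erase_eq_of_notMem hj]; ring
    rw [hxf]
    refine Submodule.sum_mem _ fun i hi => ?_
    exact Submodule.mem_iSup_of_mem i
      (Submodule.mem_iSup_of_mem (Finset.ne_of_mem_erase hi) (hQH i (hf i)))
  have hsub : x - f j ∈ X.H j := Submodule.sub_mem _ hx (hQH j (hf j))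
  have hzero : x - f j = 0 :=
    Submodule.disjoint_def.mp (iSupIndep_def.mp X.indep j) _ hsub key
  have : x = f j := by rw [sub_eq_zero] at hzero; exact hzero
  rw [this]
  exact hf j

/-- Theorem 1.2 of the paper: the cup-length bound from the
characteristic rank of a bundle all of whose degree-`d` monomials in low
Stiefel–Whitney classes vanish. -/
theorem statement0 {A : Type} [CommRing A] [Algebra (ZMod 2) A]
    (X : CohomSpace A) (pd : PoincareDual X)
    (r : ℕ) (hr : IsRX X r)
    (w : ℕ → A) (hw : ∀ i, w i ∈ X.H i) (hw0 : w 0 = 1)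
    (k : ℕ) (hk : k ≤ charrank X w)
    (hmono : ∀ s : Multiset ℕ, (∀ i ∈ s, i ≤ k) → s.sum = X.dim →
      (s.map w).prod = 0) :
    (cupLength X : ℚ) ≤ 1 + ((X.dim : ℚ) - (k : ℚ) - 1) / (r : ℚ) := by
  classical
  obtain ⟨hr1, hrne, hrlow⟩ := hr
  obtain ⟨a, haH, ha0⟩ := Submodule.ne_bot_iff _ |>.mp hrne
  haveI : Nontrivial A := ⟨⟨a, 0, ha0⟩⟩
  -- characteristic rank facts
  unfold charrank at hk
  have h0S : 0 ∈ {m | m ≤ X.dim ∧ ∀ j ≤ m, ∀ x ∈ X.H j, IsPolyIn w x} := by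
    refine ⟨Nat.zero_le _, fun j hj x hxj => ?_⟩
    interval_cases j
    rw [X.h0, Submodule.mem_span_singleton] at hxj
    obtain ⟨c, rfl⟩ := hxj
    exact Subalgebra.smul_mem _ (one_mem _) c
  have hSmem := Nat.sSup_mem ⟨0, h0S⟩ ⟨X.dim, fun m hm => hm.1⟩
  have hkd : k ≤ X.dim := hk.trans hSmem.1
  have hpoly : ∀ j ≤ k, ∀ x ∈ X.H j, IsPolyIn w x :=
    fun j hj x hxj => hSmem.2 j (hj.trans hk) x hxj
  -- cup length facts
  unfold cupLength
  set T := {t | ∃ x : Fin t → A, (∀ i, ∃ j, 1 ≤ j ∧ x i ∈ X.H j) ∧ ∏ i, x i ≠ 0} with hT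
  have h1H0 : (1 : A) ∈ X.H 0 := by
    rw [X.h0]; exact Submodule.mem_span_singleton_self 1
  have h0T : 0 ∈ T := ⟨fun i => i.elim0, fun i => i.elim0, by simp⟩
  have hbddT : BddAbove T := by
    refine ⟨X.dim, fun t ht => ?_⟩
    obtain ⟨x, hx, hprod⟩ := ht
    choose j hj1 hjH using hx
    have hD : (∏ i, x i) ∈ X.H (∑ i, j i) :=
      aux_prod_mem_graded h1H0 (fun hz hu => X.mul_mem hz hu) Finset.univ x j fun i _ => hjH i
    have hDd : ∑ i, j i ≤ X.dim := by
      by_contra h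
      rw [X.top _ (lt_of_not_ge h)] at hD
      exact hprod ((Submodule.mem_bot _).mp hD)
    calc t = ∑ _i : Fin t, 1 := by simp
      _ ≤ ∑ i, j i := Finset.sum_le_sum fun i _ => hj1 i
      _ ≤ X.dim := hDd
  have htT : sSup T ∈ T := Nat.sSup_mem ⟨0, h0T⟩ hbddT
  set t := sSup T with ht_def
  by_contra hcon
  push_neg at hcon
  have hrQ : (0 : ℚ) < r := by exact_mod_cast hr1
  have hkdQ : (k : ℚ) ≤ (X.dim : ℚ) := by exact_mod_cast hkd
  have ht1 : 1 ≤ t := by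
    by_contra h
    push_neg at h
    interval_cases t
    have hge : (-1 : ℚ) ≤ ((X.dim : ℚ) - k - 1) / r := by
      rw [le_div_iff₀ hrQ]
      have hr1Q : (1 : ℚ) ≤ r := by exact_mod_cast hr1
      linarith
    simp only [Nat.cast_zero] at hcon
    linarith
  have hnat : X.dim ≤ k + (t - 1) * r := by
    have h1 : ((X.dim : ℚ) - k - 1) / r < (t : ℚ) - 1 := by linarith
    have h2 : (X.dim : ℚ) - k - 1 < ((t : ℚ) - 1) * r := by
      rw [div_lt_iff₀ hrQ] at h1; linarith
    have h3 : ((t - 1 : ℕ) : ℚ) = (t : ℚ) - 1 := by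
      rw [Nat.cast_sub ht1]; simp
    have h4 : (X.dim : ℚ) < ((k + (t - 1) * r + 1 : ℕ) : ℚ) := by
      push_cast [h3]
      linarith
    exact Nat.lt_succ_iff.mp (by exact_mod_cast h4)
  -- the witness
  obtain ⟨x, hx, hprod⟩ := htT
  choose j hj1 hjH using hx
  have hxne : ∀ i, x i ≠ 0 := fun i h =>
    hprod (Finset.prod_eq_zero (Finset.mem_univ i) h)
  have hjr : ∀ i, r ≤ j i := by
    intro i
    by_contra h
    push_neg at h
    have := hrlow (j i) (hj1 i) h ▸ hjH i
    exact hxne i ((Submodule.mem_bot _).mp this)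
  set D := ∑ i, j i with hD_def
  have hDH : (∏ i, x i) ∈ X.H D :=
    aux_prod_mem_graded h1H0 (fun hz hu => X.mul_mem hz hu) Finset.univ x j fun i _ => hjH i
  have hDd : D ≤ X.dim := by
    by_contra h
    rw [X.top _ (lt_of_not_ge h)] at hDH
    exact hprod ((Submodule.mem_bot _).mp hDH)
  have htrD : (t - 1) * r ≤ D := by
    have h1 : t * r ≤ D := by
      have := Finset.card_nsmul_le_sum Finset.univ j r fun i _ => hjr i
      simpa [smul_eq_mul] using this
    exact le_trans (Nat.mul_le_mul_right r (Nat.sub_le t 1)) h1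
  have hjk : ∀ i, j i ≤ k := by
    intro i
    have h1 : (t - 1) * r ≤ ∑ i' ∈ Finset.univ.erase i, j i' := by
      have hcard : (Finset.univ.erase i).card = t - 1 := by
        rw [Finset.card_erase_of_mem (Finset.mem_univ i), Finset.card_univ, Fintype.card_fin]
      calc (t - 1) * r = (Finset.univ.erase i).card • r := by rw [hcard, smul_eq_mul]
        _ ≤ _ := Finset.card_nsmul_le_sum _ _ _ fun i' _ => hjr i'
    have h2 : j i + (t - 1) * r ≤ D := by
      calc j i + (t - 1) * r ≤ j i + ∑ i' ∈ Finset.univ.erase i, j i' :=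
            Nat.add_le_add_left h1 _
        _ = D := Finset.add_sum_erase _ _ (Finset.mem_univ i)
    exact Nat.le_of_add_le_add_right (h2.trans (hDd.trans hnat))
  have heD : X.dim - D ≤ k := by
    have : X.dim ≤ k + D := hnat.trans (Nat.add_le_add_left htrD k)
    omega
  -- Poincaré duality
  obtain ⟨y, hyH, hzy⟩ := pd D hDd (∏ i, x i) hDH hprod
  -- the span of k-bounded monomials
  set P : ℕ → Submodule (ZMod 2) A := fun n =>
    Submodule.span (ZMod 2)
      {m | ∃ s : Multiset ℕ, s.sum = n ∧ (∀ i ∈ s, i ≤ k) ∧ m = (s.map w).prod} with hP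
  have hQP : ∀ n ≤ k, ∀ z ∈ X.H n, z ∈ P n := by
    intro n hn z hzH
    have hmem := aux_mem_span_monomials X w hw hzH (hpoly n hn z hzH)
    refine Submodule.span_le.mpr ?_ hmem
    rintro m ⟨s, rfl, rfl⟩
    refine Submodule.subset_span ⟨s, rfl, fun i hi => ?_, rfl⟩
    refine le_trans ?_ hn
    obtain ⟨u, rfl⟩ := Multiset.exists_cons_of_mem hi
    simp
  have hmulP : ∀ {a b : ℕ} {z u : A}, z ∈ P a → u ∈ P b → z * u ∈ P (a + b) := by
    intro a b z u hz hu
    have h := Submodule.mul_mem_mul hz hu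
    have hle : P a * P b ≤ P (a + b) := by
      rw [hP, Submodule.span_mul_span]
      refine Submodule.span_le.mpr ?_
      rintro m ⟨m1, ⟨s1, rfl, hs1, rfl⟩, m2, ⟨s2, rfl, hs2, rfl⟩, rfl⟩
      refine Submodule.subset_span ⟨s1 + s2, by simp, fun i hi => ?_, by simp⟩
      rcases Multiset.mem_add.mp hi with h' | h'
      exacts [hs1 i h', hs2 i h']
    exact hle h
  have h1P : (1 : A) ∈ P 0 :=
    Submodule.subset_span ⟨0, by simp, by simp, by simp⟩
  have hxP : ∀ i, x i ∈ P (j i) := fun i => hQP (j i) (hjk i) (x i) (hjH i)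
  have hprodP : (∏ i, x i) ∈ P D :=
    aux_prod_mem_graded h1P (fun hz hu => hmulP hz hu) Finset.univ x j fun i _ => hxP i
  have hyP : y ∈ P (X.dim - D) := hQP _ heD y hyH
  have hzyP : (∏ i, x i) * y ∈ P X.dim := by
    have := hmulP hprodP hyP
    rwa [Nat.add_sub_cancel' hDd] at this
  have hPbot : P X.dim ≤ ⊥ := by
    rw [hP]
    refine Submodule.span_le.mpr ?_
    rintro m ⟨s, hsum, hle, rfl⟩
    simp [hmono s hle hsum]
  exact hzy ((Submodule.mem_bot _).mp (hPbot hzyP))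
end

section
/- Let X be a connected closed smooth d-manifold with ucharrank(X) = d. Then there exists a real vector bundle ξ over X such that cup(X) equals the maximum k for which there exist i_1,…,i_k ≥ 1 with w_{i_1}(ξ)···w_{i_k}(ξ) ≠ 0 in H^*(X; Z/2). -/
/-! An abstract framework for the mod-2 cohomology ring of a connected finite
CW-complex, Stiefel–Whitney classes of real vector bundles, characteristic rank
and cup-length, following Naolekar–Thakur,
"Note on the characteristic rank of vector bundles". -/

variable (A : Type) [CommRing A] [Algebra (ZMod 2) A]

variable {A}

section Auxiliary

variable {A : Type} [CommRing A] [Algebra (ZMod 2) A]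

/-- Products of at least `t` classes `w k` with `k ≥ 1`. -/
def posMon (w : ℕ → A) (t : ℕ) : Set A :=
  {a | ∃ l : List ℕ, (∀ k ∈ l, 1 ≤ k) ∧ t ≤ l.length ∧ a = (l.map w).prod}

lemma posMon_mono (w : ℕ → A) {s t : ℕ} (h : s ≤ t) : posMon w t ⊆ posMon w s := by
  rintro a ⟨l, h1, h2, h3⟩
  exact ⟨l, h1, h.trans h2, h3⟩

lemma posMon_mul {w : ℕ → A} {s t : ℕ} {a b : A} (ha : a ∈ posMon w s)
    (hb : b ∈ posMon w t) : a * b ∈ posMon w (s + t) := by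
  obtain ⟨l, h1, h2, rfl⟩ := ha
  obtain ⟨m, k1, k2, rfl⟩ := hb
  refine ⟨l ++ m, ?_, ?_, ?_⟩
  · intro k hk
    rcases List.mem_append.mp hk with h | h
    exacts [h1 k h, k1 k h]
  · simpa using Nat.add_le_add h2 k2
  · simp

lemma span_posMon_mul {w : ℕ → A} {s t : ℕ} {x y : A}
    (hx : x ∈ Submodule.span (ZMod 2) (posMon w s))
    (hy : y ∈ Submodule.span (ZMod 2) (posMon w t)) :
    x * y ∈ Submodule.span (ZMod 2) (posMon w (s + t)) := by
  have h := Submodule.mul_mem_mul hx hy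
  rw [Submodule.span_mul_span] at h
  refine Submodule.span_mono ?_ h
  rintro a ⟨u, hu, v, hv, rfl⟩
  exact posMon_mul hu hv

lemma listProd_mem (X : CohomSpace A) {w : ℕ → A} (hw : ∀ i, w i ∈ X.H i) :
    ∀ l : List ℕ, (l.map w).prod ∈ X.H l.sum := by
  intro l
  induction l with
  | nil => simpa [X.h0] using Submodule.mem_span_singleton_self (1 : A)
  | cons k l ih => simpa using X.mul_mem (hw k) ih

lemma prod_mem_H (X : CohomSpace A) {ι : Type*} (s : Finset ι) (x : ι → A) (j : ι → ℕ)
    (hx : ∀ i ∈ s, x i ∈ X.H (j i)) :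
    ∏ i ∈ s, x i ∈ X.H (∑ i ∈ s, j i) := by
  classical
  induction s using Finset.induction_on with
  | empty => simpa [X.h0] using Submodule.mem_span_singleton_self (1 : A)
  | @insert a s hns ih =>
      rw [Finset.prod_insert hns, Finset.sum_insert hns]
      exact X.mul_mem (hx _ (Finset.mem_insert_self _ _))
        (ih fun i hi => hx i (Finset.mem_insert_of_mem hi))

/-- A positive-degree class which is a polynomial in the `w i` lies in the span
of the nonempty monomials in positive-index `w`'s. -/
lemma mem_span_posMon (X : CohomSpace A) {w : ℕ → A} (hw : ∀ i, w i ∈ X.H i)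
    (hw0 : w 0 = 1) {j : ℕ} (hj : 1 ≤ j) {x : A} (hx : x ∈ X.H j)
    (hp : IsPolyIn w x) : x ∈ Submodule.span (ZMod 2) (posMon w 1) := by
  set M : Set A := posMon w 1 with hM
  have hsetmul : ∀ a ∈ ({1} ∪ M : Set A), ∀ b ∈ ({1} ∪ M : Set A),
      a * b ∈ ({1} ∪ M : Set A) := by
    rintro a (rfl | ha) b (rfl | hb)
    · exact Or.inl (by simp)
    · exact Or.inr (by simpa using hb)
    · exact Or.inr (by simpa using ha)
    · exact Or.inr (posMon_mono w (by norm_num) (posMon_mul ha hb))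
  set N : Submodule (ZMod 2) A := Submodule.span (ZMod 2) ({1} ∪ M) with hN
  have hone : (1 : A) ∈ N := Submodule.subset_span (Or.inl rfl)
  have hNmul : ∀ u v : A, u ∈ N → v ∈ N → u * v ∈ N := by
    intro u v hu hv
    have h := Submodule.mul_mem_mul hu hv
    rw [hN, Submodule.span_mul_span] at h
    refine Submodule.span_mono ?_ h
    rintro a ⟨p, hp, q, hq, rfl⟩
    exact hsetmul p hp q hq
  have hadj : Algebra.adjoin (ZMod 2) (Set.range w) ≤ N.toSubalgebra hone hNmul := by
    apply Algebra.adjoin_le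
    rintro _ ⟨k, rfl⟩
    rw [SetLike.mem_coe, Submodule.mem_toSubalgebra]
    cases k with
    | zero => rw [hw0]; exact hone
    | succ k =>
        exact Submodule.subset_span (Or.inr ⟨[k + 1], by simp, by simp, by simp⟩)
  have hxN : x ∈ N := Submodule.mem_toSubalgebra.mp (hadj hp)
  rw [hN, Submodule.span_union, Submodule.mem_sup] at hxN
  obtain ⟨y, hy, z, hz, hyz⟩ := hxN
  -- the part of positive degree
  set K : Submodule (ZMod 2) A := ⨆ (i : ℕ) (_ : i ≠ 0), X.H i with hK
  have hMK : Submodule.span (ZMod 2) M ≤ K := by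
    rw [Submodule.span_le]
    rintro a ⟨l, h1, h2, rfl⟩
    have hsum : l.sum ≠ 0 := by
      cases l with
      | nil => simp at h2
      | cons k l' =>
          have hk : 1 ≤ k := h1 k List.mem_cons_self
          simp only [List.sum_cons]
          omega
    exact le_iSup₂ (f := fun (i : ℕ) (_ : i ≠ 0) => X.H i) l.sum hsum
      (listProd_mem X hw l)
  have hxK : x ∈ K :=
    le_iSup₂ (f := fun (i : ℕ) (_ : i ≠ 0) => X.H i) j (by omega) hx
  have hzK : z ∈ K := hMK hz
  have hyK : y ∈ K := by
    have : y = x - z := by rw [← hyz]; ring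
    rw [this]; exact K.sub_mem hxK hzK
  have hy0 : y ∈ X.H 0 := by
    rw [X.h0]; exact hy
  have hdis : Disjoint (X.H 0) K := X.indep 0
  have : y = 0 := Submodule.disjoint_def.mp hdis y hy0 hyK
  rw [← hyz, this, zero_add]
  exact hz

lemma prod_mem_span_posMon {w : ℕ → A} {t : ℕ} (x : Fin t → A)
    (hx : ∀ i, x i ∈ Submodule.span (ZMod 2) (posMon w 1)) :
    ∏ i, x i ∈ Submodule.span (ZMod 2) (posMon w t) := by
  induction t with
  | zero =>
      simpa using Submodule.subset_span (s := posMon w 0)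
        ⟨[], by simp, by simp, by simp⟩
  | succ t ih =>
      rw [Fin.prod_univ_succ]
      have h := span_posMon_mul (hx 0) (ih (fun i => x i.succ) (fun i => hx _))
      rwa [Nat.add_comm 1 t] at h

end Auxiliary

/-- Theorem 1.4: if `ucharrank X = dim X` then the cup-length
is realized as the maximal length of a nonzero product of Stiefel–Whitney
classes of some bundle. -/
theorem statement1 {A : Type} [CommRing A] [Algebra (ZMod 2) A]
    (X : CohomSpace A) (pd : PoincareDual X) (B : BundleTheory X)
    (h : ucharrank X B = X.dim) :
    ∃ ξ : B.VB, cupLength X =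
      sSup {k | ∃ i : Fin k → ℕ, (∀ t, 1 ≤ i t) ∧ ∏ t, B.w ξ (i t) ≠ 0} := by
  classical
  -- every charrank is at most the dimension
  have hcr_le : ∀ w : ℕ → A, charrank X w ≤ X.dim := fun w =>
    csSup_le' (fun k hk => hk.1)
  -- pick a bundle realizing the upper characteristic rank
  obtain ⟨ξ0⟩ := B.nonempty
  have hne : (Set.range fun ξ : B.VB => charrank X (B.w ξ)).Nonempty := ⟨_, ⟨ξ0, rfl⟩⟩
  have hbdd : BddAbove (Set.range fun ξ : B.VB => charrank X (B.w ξ)) :=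
    ⟨X.dim, by rintro _ ⟨ξ, rfl⟩; exact hcr_le _⟩
  obtain ⟨ξ, hξ⟩ := Nat.sSup_mem hne hbdd
  have hξd : charrank X (B.w ξ) = X.dim := hξ.trans h
  refine ⟨ξ, ?_⟩
  set w : ℕ → A := B.w ξ with hwdef
  have hw : ∀ i, w i ∈ X.H i := B.w_mem ξ
  have hw0 : w 0 = 1 := B.w_zero ξ
  -- the characteristic-rank set
  set C : Set ℕ := {k | k ≤ X.dim ∧ ∀ j ≤ k, ∀ x ∈ X.H j, IsPolyIn w x} with hCdef
  have hC0 : 0 ∈ C := by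
    refine ⟨Nat.zero_le _, ?_⟩
    intro j hj x hx
    have hj0 : j = 0 := Nat.le_zero.mp hj
    subst hj0
    rw [X.h0] at hx
    obtain ⟨c, rfl⟩ := Submodule.mem_span_singleton.mp hx
    exact Subalgebra.smul_mem _ (Subalgebra.one_mem _) c
  have hCb : BddAbove C := ⟨X.dim, fun k hk => hk.1⟩
  have hCmem : X.dim ∈ C := by
    have h1 := Nat.sSup_mem ⟨0, hC0⟩ hCb
    rwa [show sSup C = X.dim from hξd] at h1
  have hpoly : ∀ j ≤ X.dim, ∀ x ∈ X.H j, IsPolyIn w x := hCmem.2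
  -- every positive-degree class lies in the span of positive monomials
  have hspan : ∀ j, 1 ≤ j → ∀ x ∈ X.H j,
      x ∈ Submodule.span (ZMod 2) (posMon w 1) := by
    intro j hj x hx
    by_cases hjd : j ≤ X.dim
    · exact mem_span_posMon X hw hw0 hj hx (hpoly j hjd x hx)
    · have hx0 : x = 0 := by
        have := X.top j (by omega)
        rw [this] at hx
        simpa using hx
      rw [hx0]; exact Submodule.zero_mem _
  set cupset : Set ℕ :=
    {t | ∃ x : Fin t → A, (∀ i, ∃ j, 1 ≤ j ∧ x i ∈ X.H j) ∧ ∏ i, x i ≠ 0} with hcupdef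
  set Sset : Set ℕ :=
    {k | ∃ i : Fin k → ℕ, (∀ t, 1 ≤ i t) ∧ ∏ t, w (i t) ≠ 0} with hSdef
  have hSsub : Sset ⊆ cupset := by
    rintro k ⟨i, hi, hne⟩
    exact ⟨fun t => w (i t), fun t => ⟨i t, hi t, hw (i t)⟩, hne⟩
  have hcup_le : ∀ t ∈ cupset, t ≤ X.dim := by
    rintro t ⟨x, hx, hprod⟩
    choose j hj1 hj2 using hx
    have hm := prod_mem_H X Finset.univ x j (fun i _ => hj2 i)
    have hsum_le : ∑ i, j i ≤ X.dim := by
      by_contra hgt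
      push_neg at hgt
      rw [X.top _ hgt] at hm
      exact hprod (by simpa using hm)
    have ht : t ≤ ∑ i, j i := by
      calc t = ∑ _i : Fin t, 1 := by simp
      _ ≤ ∑ i, j i := Finset.sum_le_sum (fun i _ => hj1 i)
    omega
  have hcupb : BddAbove cupset := ⟨X.dim, fun t ht => hcup_le t ht⟩
  have hSb : BddAbove Sset := ⟨X.dim, fun k hk => hcup_le k (hSsub hk)⟩
  refine le_antisymm ?_ ?_
  · -- cupLength ≤ sSup Sset
    refine csSup_le' ?_
    rintro t ⟨x, hx, hprod⟩
    choose j hj1 hj2 using hx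
    have hxs : ∀ i, x i ∈ Submodule.span (ZMod 2) (posMon w 1) :=
      fun i => hspan (j i) (hj1 i) (x i) (hj2 i)
    have hprodmem := prod_mem_span_posMon x hxs
    have hex : ∃ m ∈ posMon w t, m ≠ 0 := by
      by_contra hc
      push_neg at hc
      have hle : Submodule.span (ZMod 2) (posMon w t) ≤ ⊥ :=
        Submodule.span_le.mpr (fun m hm => by simp [hc m hm])
      exact hprod (by simpa using hle hprodmem)
    obtain ⟨m, ⟨l, hl1, hl2, rfl⟩, hm0⟩ := hex
    have hLmem : l.length ∈ Sset := by
      refine ⟨fun u => l.get u, fun u => hl1 _ (List.get_mem l u), ?_⟩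
      have heq : ∏ u : Fin l.length, w (l.get u) = (l.map w).prod :=
        Fin.prod_univ_fun_getElem l w
      rw [heq]
      exact hm0
    exact le_trans hl2 (le_csSup hSb hLmem)
  · -- sSup Sset ≤ cupLength
    exact csSup_le' (fun k hk => le_csSup hcupb (hSsub hk))
end

section
/- Let X be a connected finite CW-complex with 1 ≤ r_X ≤ dim X, where r_X is the least positive degree with nonzero reduced Z/2-cohomology. If ucharrank(X) ≥ r_X then dim_{Z/2} H^{r_X}(X; Z/2) = 1. -/
/-! An abstract framework for the mod-2 cohomology ring of a connected finite
CW-complex, Stiefel–Whitney classes of real vector bundles, characteristic rank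
and cup-length, following Naolekar–Thakur,
"Note on the characteristic rank of vector bundles". -/

variable (A : Type) [CommRing A] [Algebra (ZMod 2) A]

variable {A}

/-- Lemma 2.2(1): if `ucharrank X ≥ r_X` then
`H^{r_X}(X; Z/2)` is one dimensional. -/
theorem statement6 {A : Type} [CommRing A] [Algebra (ZMod 2) A]
    (X : CohomSpace A) (B : BundleTheory X)
    (r : ℕ) (hr : IsRX X r) (hrd : r ≤ X.dim)
    (h : r ≤ ucharrank X B) :
    Module.finrank (ZMod 2) (X.H r) = 1 := by
    classical
  obtain ⟨hr1, hrne, hrlow⟩ := hr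
  have : Nonempty B.VB := B.nonempty
  -- find a bundle achieving the ucharrank
  have hbdd : BddAbove (Set.range fun ξ : B.VB => charrank X (B.w ξ)) := by
    refine ⟨X.dim, ?_⟩
    rintro _ ⟨ξ, rfl⟩
    exact csSup_le' (fun k hk => hk.1)
  obtain ⟨ξ, hξ⟩ := Nat.sSup_mem (Set.range_nonempty _) hbdd
  set w := B.w ξ with hw
  have hξ' : charrank X (B.w ξ) = ucharrank X B := hξ
  have hrc : r ≤ charrank X w := le_trans h (le_of_eq hξ'.symm)
  -- the sSup defining charrank is attained
  have hSb : BddAbove {k | k ≤ X.dim ∧ ∀ j ≤ k, ∀ x ∈ X.H j, IsPolyIn w x} :=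
    ⟨X.dim, fun k hk => hk.1⟩
  have hSne : Set.Nonempty {k | k ≤ X.dim ∧ ∀ j ≤ k, ∀ x ∈ X.H j, IsPolyIn w x} := by
    by_contra hne
    rw [Set.not_nonempty_iff_eq_empty] at hne
    rw [charrank, hne, csSup_empty] at hrc
    simp at hrc
    omega
  have hS := Nat.sSup_mem hSne hSb
  have hpoly : ∀ x ∈ X.H r, IsPolyIn w x := hS.2 r hrc
  -- low-degree SW classes vanish
  have hwlow : ∀ j, 1 ≤ j → j < r → w j = 0 := by
    intro j h1 h2
    have hm := B.w_mem ξ j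
    rw [hrlow j h1 h2] at hm
    simpa using hm
  set N : Submodule (ZMod 2) A := ⨆ j : {j : ℕ // r < j}, X.H j.1 with hN
  have hHsubN : ∀ j, r < j → X.H j ≤ N := fun j hj =>
    le_iSup (fun j : {j : ℕ // r < j} => X.H j.1) ⟨j, hj⟩
  have hHN : ∀ i, 1 ≤ i → ∀ y ∈ X.H i, ∀ x ∈ N, x * y ∈ N := by
    intro i hi y hy x hx
    refine Submodule.iSup_induction _ (motive := fun x => x * y ∈ N) hx ?_ ?_ ?_
    · rintro ⟨j, hj⟩ z hz
      exact hHsubN (j + i) (by omega) (X.mul_mem hz hy)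
    · simp
    · intro a b ha hb; rw [add_mul]; exact N.add_mem ha hb
  have hNN : ∀ x ∈ N, ∀ y ∈ N, x * y ∈ N := by
    intro x hx y hy
    refine Submodule.iSup_induction _ (motive := fun y => x * y ∈ N) hy ?_ ?_ ?_
    · rintro ⟨j, hj⟩ z hz
      exact hHN j (by omega) z hz x hx
    · simp
    · intro a b ha hb; rw [mul_add]; exact N.add_mem ha hb
  set P := Submodule.span (ZMod 2) ({1, w r} : Set A) with hP
  have hPmem : ∀ p ∈ P, ∃ a b : ZMod 2, p = a • (1 : A) + b • w r := by
    intro p hp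
    obtain ⟨a, b, hab⟩ := Submodule.mem_span_pair.mp hp
    exact ⟨a, b, hab.symm⟩
  have h1P : (1 : A) ∈ P := Submodule.subset_span (by simp)
  have hwrP : w r ∈ P := Submodule.subset_span (by simp)
  have hwr2N : w r * w r ∈ N := hHsubN (r + r) (by omega) (X.mul_mem (B.w_mem ξ r) (B.w_mem ξ r))
  -- the submodule P ⊔ N is closed under multiplication
  have hMmul : ∀ x ∈ P ⊔ N, ∀ y ∈ P ⊔ N, x * y ∈ P ⊔ N := by
    intro x hx y hy
    obtain ⟨p, hp, n, hn, rfl⟩ := Submodule.mem_sup.mp hx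
    obtain ⟨q, hq, m, hm, rfl⟩ := Submodule.mem_sup.mp hy
    obtain ⟨a, b, rfl⟩ := hPmem p hp
    obtain ⟨c, d, rfl⟩ := hPmem q hq
    have hwrm : w r * m ∈ N := by
      rw [mul_comm]; exact hHN r hr1 (w r) (B.w_mem ξ r) m hm
    have hnwr : n * w r ∈ N := hHN r hr1 (w r) (B.w_mem ξ r) n hn
    have key : (a • (1 : A) + b • w r + n) * (c • (1 : A) + d • w r + m)
        = ((a * c) • (1 : A) + (a * d + b * c) • w r)
          + ((b * d) • (w r * w r) + (a • m + b • (w r * m)) + (c • n + d • (n * w r)) + n * m) := by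
      simp only [Algebra.smul_def, map_mul, map_add]
      ring
    rw [key]
    refine Submodule.add_mem _ (Submodule.mem_sup_left ?_) (Submodule.mem_sup_right ?_)
    · exact P.add_mem (P.smul_mem _ h1P) (P.smul_mem _ hwrP)
    · refine N.add_mem (N.add_mem (N.add_mem (N.smul_mem _ hwr2N) ?_) ?_) (hNN n hn m hm)
      · exact N.add_mem (N.smul_mem _ hm) (N.smul_mem _ hwrm)
      · exact N.add_mem (N.smul_mem _ hn) (N.smul_mem _ hnwr)
  -- the adjoin of the SW classes is contained in P ⊔ N
  have hadj : ∀ x : A, IsPolyIn w x → x ∈ P ⊔ N := by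
    intro x hx
    induction hx using Algebra.adjoin_induction with
    | mem z hz =>
      obtain ⟨i, rfl⟩ := hz
      rcases Nat.lt_trichotomy i r with hi | hi | hi
      · rcases Nat.eq_zero_or_pos i with h0 | h0
        · subst h0; rw [hw, B.w_zero]; exact Submodule.mem_sup_left h1P
        · rw [hwlow i h0 hi]; exact Submodule.zero_mem _
      · subst hi; exact Submodule.mem_sup_left hwrP
      · exact Submodule.mem_sup_right (hHsubN i hi (B.w_mem ξ i))
    | algebraMap c =>
      rw [Algebra.algebraMap_eq_smul_one]
      exact Submodule.mem_sup_left (P.smul_mem _ h1P)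
    | add x y hx hy ihx ihy => exact Submodule.add_mem _ ihx ihy
    | mul x y hx hy ihx ihy => exact hMmul x ihx y ihy
  -- every element of H r is a scalar multiple of w r
  have key : ∀ x ∈ X.H r, ∃ b : ZMod 2, x = b • w r := by
    intro x hx
    obtain ⟨p, hp, n, hn, hxe⟩ := Submodule.mem_sup.mp (hadj x (hpoly x hx))
    obtain ⟨a, b, rfl⟩ := hPmem p hp
    refine ⟨b, ?_⟩
    have hsub : x - b • w r ∈ X.H r :=
      (X.H r).sub_mem hx (Submodule.smul_mem _ _ (B.w_mem ξ r))
    have heq : x - b • w r = a • (1 : A) + n := by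
      rw [← hxe]; abel
    have hmem2 : x - b • w r ∈ ⨆ (j) (_ : j ≠ r), X.H j := by
      rw [heq]
      refine Submodule.add_mem _ ?_ ?_
      · refine Submodule.mem_iSup_of_mem 0 (Submodule.mem_iSup_of_mem (by omega) ?_)
        rw [X.h0]
        exact Submodule.smul_mem _ _ (Submodule.mem_span_singleton_self 1)
      · refine (iSup_le fun j : {j : ℕ // r < j} =>
          le_iSup_of_le j.1 (le_iSup_of_le (by have := j.2; omega) le_rfl) :
          N ≤ ⨆ (j) (_ : j ≠ r), X.H j) hn
    have h0 : x - b • w r = 0 := by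
      have := (X.indep r).le_bot (Submodule.mem_inf.mpr ⟨hsub, hmem2⟩)
      simpa using this
    exact sub_eq_zero.mp h0
  -- conclude
  obtain ⟨x0, hx0mem, hx0ne⟩ := Submodule.exists_mem_ne_zero_of_ne_bot hrne
  obtain ⟨b0, hb0⟩ := key x0 hx0mem
  have hwr0 : w r ≠ 0 := by
    intro h0; exact hx0ne (by rw [hb0, h0, smul_zero])
  have hspan : X.H r = Submodule.span (ZMod 2) {w r} := by
    apply le_antisymm
    · intro x hx
      obtain ⟨b, rfl⟩ := key x hx
      exact Submodule.smul_mem _ _ (Submodule.mem_span_singleton_self _)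
    · rw [Submodule.span_le, Set.singleton_subset_iff]
      exact B.w_mem ξ r
  rw [hspan]
  exact finrank_span_singleton hwr0
end

section
/- Let X be a connected finite CW-complex with 1 ≤ r_X ≤ dim X. If r_X is not a power of 2, then ucharrank(X) = r_X − 1. -/
/-! An abstract framework for the mod-2 cohomology ring of a connected finite
CW-complex, Stiefel–Whitney classes of real vector bundles, characteristic rank
and cup-length, following Naolekar–Thakur,
"Note on the characteristic rank of vector bundles". -/

variable (A : Type) [CommRing A] [Algebra (ZMod 2) A]

variable {A}

theorem charrank_eq_aux {A : Type} [CommRing A] [Algebra (ZMod 2) A]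
    (X : CohomSpace A) (B : BundleTheory X)
    (r : ℕ) (hr : IsRX X r) (hrd : r ≤ X.dim)
    (hAH : ∀ ξ : B.VB, ∀ k, 1 ≤ k → (∀ j, 1 ≤ j → j < k → B.w ξ j = 0) →
      B.w ξ k ≠ 0 → ∃ s, k = 2 ^ s)
    (h2 : ¬ ∃ s, r = 2 ^ s) (ξ : B.VB) :
    charrank X (B.w ξ) = r - 1 := by
  obtain ⟨hr1, hrbot, hrlow⟩ := hr
  have hGreat : IsGreatest
      {k | k ≤ X.dim ∧ ∀ j ≤ k, ∀ x ∈ X.H j, IsPolyIn (B.w ξ) x} (r - 1) := by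
    constructor
    · refine ⟨le_trans (Nat.sub_le r 1) hrd, ?_⟩
      intro j hj x hx
      rcases Nat.eq_zero_or_pos j with h0 | h1
      · subst h0
        rw [X.h0, Submodule.mem_span_singleton] at hx
        obtain ⟨c, rfl⟩ := hx
        exact Subalgebra.smul_mem _ (Subalgebra.one_mem _) c
      · have hjr : j < r := by omega
        rw [hrlow j h1 hjr] at hx
        simp only [Submodule.mem_bot] at hx
        subst hx
        exact Subalgebra.zero_mem _
    · intro k hk
      by_contra hlt
      push_neg at hlt
      have hrk : r ≤ k := by omega
      have hw0 : ∀ j, 1 ≤ j → j < r → B.w ξ j = 0 := by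
        intro j h1 h2'
        have hmem := B.w_mem ξ j
        rw [hrlow j h1 h2'] at hmem
        simpa using hmem
      have hwr : B.w ξ r = 0 := by
        by_contra hne
        exact h2 (hAH ξ r hr1 hw0 hne)
      obtain ⟨x, hx, hxne⟩ := (Submodule.ne_bot_iff _).mp hrbot
      have hpoly : x ∈ Algebra.adjoin (ZMod 2) (Set.range (B.w ξ)) :=
        hk.2 r hrk x hx
      set I : Set ℕ := insert 0 {j | r < j} with hI
      have hclosure : ∀ y ∈ Submonoid.closure (Set.range (B.w ξ)),
          ∃ i ∈ I, y ∈ X.H i := by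
        intro y hy
        induction hy using Submonoid.closure_induction with
        | mem z hz =>
          obtain ⟨j, rfl⟩ := hz
          rcases lt_trichotomy j r with h | h | h
          · rcases Nat.eq_zero_or_pos j with h0 | h1
            · subst h0
              rw [B.w_zero]
              exact ⟨0, Or.inl rfl, by
                rw [X.h0]; exact Submodule.mem_span_singleton_self 1⟩
            · rw [hw0 j h1 h]
              exact ⟨0, Or.inl rfl, Submodule.zero_mem _⟩
          · subst h
            rw [hwr]
            exact ⟨0, Or.inl rfl, Submodule.zero_mem _⟩
          · exact ⟨j, Or.inr h, B.w_mem ξ j⟩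
        | one =>
          exact ⟨0, Or.inl rfl, by
            rw [X.h0]; exact Submodule.mem_span_singleton_self 1⟩
        | mul a b _ _ ha hb =>
          obtain ⟨i, hiI, hai⟩ := ha
          obtain ⟨i', hiI', hbi⟩ := hb
          refine ⟨i + i', ?_, X.mul_mem hai hbi⟩
          simp only [hI, Set.mem_insert_iff, Set.mem_setOf_eq] at hiI hiI' ⊢
          omega
      have hle : (Algebra.adjoin (ZMod 2) (Set.range (B.w ξ)) : Set A) ⊆
          ((⨆ i ∈ I, X.H i : Submodule (ZMod 2) A) : Set A) := by
        intro y hy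
        have hy' : y ∈ Submodule.span (ZMod 2)
            ((Submonoid.closure (Set.range (B.w ξ)) : Submonoid A) : Set A) := by
          rw [← Algebra.adjoin_eq_span]
          exact hy
        refine Submodule.span_le.mpr ?_ hy' 
        intro z hz
        obtain ⟨i, hiI, hzi⟩ := hclosure z hz
        exact Submodule.mem_iSup_of_mem i (Submodule.mem_iSup_of_mem hiI hzi)
      have hTle : (⨆ i ∈ I, X.H i : Submodule (ZMod 2) A) ≤
          ⨆ j, ⨆ _ : j ≠ r, X.H j := by
        refine iSup₂_le fun i hi => ?_
        have hir : i ≠ r := by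
          simp only [hI, Set.mem_insert_iff, Set.mem_setOf_eq] at hi
          omega
        exact le_iSup₂ (f := fun j (_ : j ≠ r) => X.H j) i hir
      have hdis := X.indep r
      have hx0 : x = 0 :=
        Submodule.disjoint_def.mp hdis x hx (hTle (hle hpoly))
      exact hxne hx0
  exact hGreat.csSup_eq

/-- Lemma 2.2(2): if `r_X` is not a power of `2` then
`ucharrank X = r_X - 1`.  Uses the classical fact that the lowest degree of a
nonzero positive-degree Stiefel–Whitney class is always a power of `2`. -/
theorem statement7 {A : Type} [CommRing A] [Algebra (ZMod 2) A]
    (X : CohomSpace A) (B : BundleTheory X)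
    (r : ℕ) (hr : IsRX X r) (hrd : r ≤ X.dim)
    (hAH : ∀ ξ : B.VB, ∀ k, 1 ≤ k → (∀ j, 1 ≤ j → j < k → B.w ξ j = 0) →
      B.w ξ k ≠ 0 → ∃ s, k = 2 ^ s)
    (h2 : ¬ ∃ s, r = 2 ^ s) :
    ucharrank X B = r - 1 := by
  have hcr : ∀ ξ : B.VB, charrank X (B.w ξ) = r - 1 :=
    charrank_eq_aux X B r hr hrd hAH h2
  obtain ⟨ξ0⟩ := B.nonempty
  have hG : IsGreatest (Set.range fun ξ : B.VB => charrank X (B.w ξ)) (r - 1) :=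
    ⟨⟨ξ0, hcr ξ0⟩, by rintro k ⟨ξ, rfl⟩; exact (hcr ξ).le⟩
  exact hG.csSup_eq
end

section
/- Let f : X → Y be a map of connected finite CW-complexes such that f* : H^*(Y; Z/2) → H^*(X; Z/2) is surjective. Then for every real vector bundle ξ over Y, charrank_X(f*ξ) ≥ min(charrank_Y(ξ), dim X). -/
/-! An abstract framework for the mod-2 cohomology ring of a connected finite
CW-complex, Stiefel–Whitney classes of real vector bundles, characteristic rank
and cup-length, following Naolekar–Thakur,
"Note on the characteristic rank of vector bundles". -/

variable (A : Type) [CommRing A] [Algebra (ZMod 2) A]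

variable {A}

/-- Lemma 2.4: if `f : X → Y` induces a surjection on mod 2
cohomology, then `charrank_X(f*ξ) ≥ min (charrank_Y ξ) (dim X)`. -/
theorem statement8 {A A' : Type} [CommRing A] [Algebra (ZMod 2) A]
    [CommRing A'] [Algebra (ZMod 2) A']
    (X : CohomSpace A) (Y : CohomSpace A')
    -- the induced map `f* : H^*(Y) → H^*(X)`
    (φ : A' →ₐ[ZMod 2] A)
    (hφmem : ∀ i, ∀ y ∈ Y.H i, φ y ∈ X.H i)
    (hφsurj : ∀ i, ∀ x ∈ X.H i, ∃ y ∈ Y.H i, φ y = x)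
    -- a bundle `ξ` on `Y`; `f*ξ` has Stiefel–Whitney classes `φ (w i)`
    (w : ℕ → A') (hw : ∀ i, w i ∈ Y.H i) (hw0 : w 0 = 1) :
    min (charrank Y w) X.dim ≤ charrank X (fun i => φ (w i)) := by
  classical
  set SY := {k | k ≤ Y.dim ∧ ∀ j ≤ k, ∀ x ∈ Y.H j, IsPolyIn w x} with hSY
  set SX := {k | k ≤ X.dim ∧ ∀ j ≤ k, ∀ x ∈ X.H j, IsPolyIn (fun i => φ (w i)) x}
    with hSX
  have h0poly : ∀ {B : Type} [CommRing B] [Algebra (ZMod 2) B]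
      (Z : CohomSpace B) (v : ℕ → B), ∀ x ∈ Z.H 0, IsPolyIn v x := by
    intro B _ _ Z v x hx
    rw [Z.h0, Submodule.mem_span_singleton] at hx
    obtain ⟨c, rfl⟩ := hx
    exact Subalgebra.smul_mem _ (Subalgebra.one_mem _) c
  have hSYne : SY.Nonempty := ⟨0, Nat.zero_le _, by
    intro j hj x hx
    interval_cases j
    exact h0poly Y w x hx⟩
  have hSYbdd : BddAbove SY := ⟨Y.dim, fun k hk => hk.1⟩
  have hcY : charrank Y w ∈ SY := Nat.sSup_mem hSYne hSYbdd
  have hk : min (charrank Y w) X.dim ∈ SX := by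
    refine ⟨min_le_right _ _, ?_⟩
    intro j hj x hx
    obtain ⟨y, hy, rfl⟩ := hφsurj j x hx
    have hpoly : IsPolyIn w y :=
      hcY.2 j (le_trans hj (min_le_left _ _)) y hy
    have : φ y ∈ (Algebra.adjoin (ZMod 2) (Set.range w)).map φ :=
      Subalgebra.mem_map.2 ⟨y, hpoly, rfl⟩
    rw [AlgHom.map_adjoin] at this
    have hrange : φ '' Set.range w = Set.range (fun i => φ (w i)) := by
      ext a; simp [Set.mem_range]
    rwa [IsPolyIn, ← hrange]
  exact le_csSup ⟨X.dim, fun k hk => hk.1⟩ hk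
end

section
/- Let π : S^d → X be a k-sheeted covering with k > 1 odd and d ≠ 1. Then every real vector bundle ξ over X has total Stiefel–Whitney class w(ξ) = 1, and ucharrank(X) = d − 1. -/
/-! An abstract framework for the mod-2 cohomology ring of a connected finite
CW-complex, Stiefel–Whitney classes of real vector bundles, characteristic rank
and cup-length, following Naolekar–Thakur,
"Note on the characteristic rank of vector bundles". -/

variable (A : Type) [CommRing A] [Algebra (ZMod 2) A]

variable {A}

/-- Corollary 2.6: if `π : S^d → X` is a `k`-sheeted covering
with `k > 1` odd and `d ≠ 1`, then every bundle on `X` has trivial total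
Stiefel–Whitney class, and `ucharrank X = d - 1`. -/
theorem statement9 {A A' : Type} [CommRing A] [Algebra (ZMod 2) A]
    [CommRing A'] [Algebra (ZMod 2) A']
    (d k : ℕ) (hd1 : d ≠ 1) (hdodd : Odd d) (hk1 : 1 < k) (hkodd : Odd k)
    -- the base `X = S^d / G`, `|G| = k`
    (X : CohomSpace A) (hXdim : X.dim = d) (B : BundleTheory X)
    (hXlow : ∀ j, 0 < j → j < d → X.H j = ⊥) (hXtop : X.H d ≠ ⊥)
    -- the sphere `S^d`
    (S : CohomSpace A') (hSdim : S.dim = d)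
    (hSlow : ∀ j, 0 < j → j < d → S.H j = ⊥)
    (BS : BundleTheory S)
    -- Atiyah–Hirzebruch: since `d ∉ {1,2,4,8}` (as `d` is odd, `d ≠ 1`),
    -- no bundle on `S^d` has `w_d ≠ 0`
    (hAH : ∀ η : BS.VB, BS.w η d = 0)
    -- the covering map `π`, inducing `π* : H^*(X) → H^*(S^d)`, injective
    (π : A →ₐ[ZMod 2] A') (hπH : ∀ i, ∀ x ∈ X.H i, π x ∈ S.H i)
    (hπinj : Function.Injective π)
    -- pullback of bundles along `π`
    (P : B.VB → BS.VB) (hP : ∀ ξ i, BS.w (P ξ) i = π (B.w ξ i)) :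
    (∀ ξ : B.VB, ∀ i, 1 ≤ i → B.w ξ i = 0) ∧ ucharrank X B = d - 1 := by
  have hd0 : 0 < d := hdodd.pos
  -- Part 1: all positive-degree SW classes vanish
  have h1 : ∀ ξ : B.VB, ∀ i, 1 ≤ i → B.w ξ i = 0 := by
    intro ξ i hi
    rcases lt_trichotomy i d with h | h | h
    · have hb := hXlow i hi h
      have hm := B.w_mem ξ i
      rw [hb] at hm
      simpa using hm
    · subst h
      apply hπinj
      rw [map_zero, ← hP, hAH]
    · have hb := X.top i (by omega)
      have hm := B.w_mem ξ i
      rw [hb] at hm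
      simpa using hm
  refine ⟨h1, ?_⟩
  -- a nonzero class in top degree
  obtain ⟨x, hxd, hx0⟩ : ∃ x ∈ X.H d, x ≠ 0 := by
    by_contra h
    push_neg at h
    exact hXtop (by
      ext y
      simp only [Submodule.mem_bot]
      exact ⟨fun hy => by_contra fun hne => hne (h y hy), fun hy => hy ▸ (X.H d).zero_mem⟩)
  have hx1 : x ≠ 1 := by
    intro h
    subst h
    have h1mem : (1 : A) ∈ X.H 0 := by
      rw [X.h0]; exact Submodule.mem_span_singleton_self 1
    have hsup : (1 : A) ∈ ⨆ (j) (_ : j ≠ 0), X.H j :=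
      Submodule.mem_iSup_of_mem d (Submodule.mem_iSup_of_mem (by omega) hxd)
    have := (X.indep 0).le_bot ⟨h1mem, hsup⟩
    simp only [Submodule.mem_bot] at this
    exact hx0 this
  -- x is not a polynomial in any SW classes
  have hnotpoly : ∀ ξ : B.VB, ¬ IsPolyIn (B.w ξ) x := by
    intro ξ hpoly
    have hrange : Set.range (B.w ξ) ⊆ (⊥ : Subalgebra (ZMod 2) A) := by
      rintro _ ⟨i, rfl⟩
      rcases Nat.eq_zero_or_pos i with h | h
      · subst h; rw [B.w_zero]; exact one_mem _
      · rw [h1 ξ i h]; exact zero_mem _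
    have hle : Algebra.adjoin (ZMod 2) (Set.range (B.w ξ)) ≤ ⊥ :=
      Algebra.adjoin_le hrange
    have hx := hle hpoly
    rw [Algebra.mem_bot] at hx
    obtain ⟨c, hc⟩ := hx
    fin_cases c
    · simp only [show ((⟨0, by omega⟩ : Fin 2) : ZMod 2) = 0 from rfl, map_zero] at hc
      exact hx0 (hc.symm.trans (map_zero (algebraMap (ZMod 2) A)))
    · simp only [show ((⟨1, by omega⟩ : Fin 2) : ZMod 2) = 1 from rfl, map_one] at hc
      exact hx1 (hc.symm.trans (map_one (algebraMap (ZMod 2) A)))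
  -- charrank of every bundle is d - 1
  have hcr : ∀ ξ : B.VB, charrank X (B.w ξ) = d - 1 := by
    intro ξ
    have hset : {k | k ≤ X.dim ∧ ∀ j ≤ k, ∀ y ∈ X.H j, IsPolyIn (B.w ξ) y}
        = Set.Iic (d - 1) := by
      ext k
      simp only [Set.mem_setOf_eq, Set.mem_Iic]
      constructor
      · rintro ⟨hk, hall⟩
        by_contra hgt
        have hkd : k = d := by omega
        exact hnotpoly ξ (hall d (by omega) x hxd)
      · intro hk
        refine ⟨by omega, fun j hj y hy => ?_⟩
        rcases Nat.eq_zero_or_pos j with h | h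
        · subst h
          rw [X.h0, Submodule.mem_span_singleton] at hy
          obtain ⟨c, rfl⟩ := hy
          have : c • (1 : A) = algebraMap (ZMod 2) A c := by
            rw [Algebra.smul_def, mul_one]
          rw [this]
          exact Subalgebra.algebraMap_mem _ c
        · have hb := hXlow j h (by omega)
          rw [hb, Submodule.mem_bot] at hy
          subst hy
          exact zero_mem _
    rw [charrank, hset, csSup_Iic]
  rw [ucharrank, show (fun ξ : B.VB => charrank X (B.w ξ)) = fun _ => d - 1 from
    funext hcr]
  have := B.nonempty
  rw [Set.range_const, csSup_singleton]
end

section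
/- Let X be a connected finite CW-complex and suppose x ∈ H^k(X; Z/2) is a spherical class with k ∉ {1,2,4,8}. Then no real vector bundle ξ over X has w_k(ξ) = x, and charrank_X(ξ) < k for every ξ; moreover for any covering π : E → X, ucharrank(E) < k. -/
/-! An abstract framework for the mod-2 cohomology ring of a connected finite
CW-complex, Stiefel–Whitney classes of real vector bundles, characteristic rank
and cup-length, following Naolekar–Thakur,
"Note on the characteristic rank of vector bundles". -/

variable (A : Type) [CommRing A] [Algebra (ZMod 2) A]

variable {A}

/-- Core lemma: on the sphere `S^k`, any class lying in the subalgebra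
generated by classes `ws i` with `ws 0 = 1`, `ws k = 0`, `ws i ∈ H i`
must be `0` if it lies in `H k` with `k ≥ 1`. -/
lemma spherical_core {A' : Type} [CommRing A'] [Algebra (ZMod 2) A']
    (S : CohomSpace A') (k : ℕ) (hk1 : 1 ≤ k) (hSdim : S.dim = k)
    (hSlow : ∀ j, 0 < j → j < k → S.H j = ⊥)
    (ws : ℕ → A') (hwmem : ∀ i, ws i ∈ S.H i) (hw0 : ws 0 = 1) (hwk : ws k = 0)
    (z : A') (hz : z ∈ S.H k) (hzne : z ≠ 0)
    (hzp : z ∈ Algebra.adjoin (ZMod 2) (Set.range ws)) : False := by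
  have hrange : Set.range ws ⊆ (⊥ : Subalgebra (ZMod 2) A') := by
    rintro _ ⟨i, rfl⟩
    rcases Nat.lt_trichotomy i k with h | h | h
    · rcases Nat.eq_zero_or_pos i with h0 | h0
      · subst h0; rw [hw0]; exact one_mem _
      · have : ws i ∈ (⊥ : Submodule (ZMod 2) A') := by
          rw [← hSlow i h0 h]; exact hwmem i
        rw [Submodule.mem_bot] at this
        rw [this]; exact zero_mem _
    · subst h; rw [hwk]; exact zero_mem _
    · have : ws i ∈ (⊥ : Submodule (ZMod 2) A') := by
        rw [← S.top i (hSdim ▸ h)]; exact hwmem i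
      rw [Submodule.mem_bot] at this
      rw [this]; exact zero_mem _
  have hzbot : z ∈ (⊥ : Subalgebra (ZMod 2) A') :=
    Algebra.adjoin_le hrange hzp
  rw [Algebra.mem_bot] at hzbot
  obtain ⟨c, hc⟩ := hzbot
  fin_cases c
  · exact hzne (by rw [← hc]; exact map_zero _)
  · have hz1 : z = 1 := by rw [← hc]; exact map_one _
    have h1k : (1 : A') ∈ S.H k := hz1 ▸ hz
    have h1sup : (1 : A') ∈ ⨆ (j) (_ : j ≠ k), S.H j := by
      have h10 : (1 : A') ∈ S.H 0 := by
        rw [S.h0]; exact Submodule.mem_span_singleton_self 1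
      exact (le_iSup₂ (f := fun j (_ : j ≠ k) => S.H j) 0
        (by omega : (0 : ℕ) ≠ k)) h10
    have h10 : (1 : A') = 0 :=
      Submodule.disjoint_def.mp (S.indep k) 1 h1k h1sup
    exact hzne (by rw [hz1, h10])

lemma spherical_key {A₀ A' : Type} [CommRing A₀] [Algebra (ZMod 2) A₀]
    [CommRing A'] [Algebra (ZMod 2) A']
    (S : CohomSpace A') (k : ℕ) (hk1 : 1 ≤ k) (hSdim : S.dim = k)
    (hSlow : ∀ j, 0 < j → j < k → S.H j = ⊥)
    (gs : A₀ →ₐ[ZMod 2] A') (ws : ℕ → A₀)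
    (hwmem : ∀ i, gs (ws i) ∈ S.H i) (hw0 : ws 0 = 1) (hwk : gs (ws k) = 0)
    (x : A₀) (hgx : gs x ≠ 0) (hgxk : gs x ∈ S.H k)
    (hxp : x ∈ Algebra.adjoin (ZMod 2) (Set.range ws)) : False := by
  have hmem : gs x ∈ Algebra.adjoin (ZMod 2)
      (Set.range (fun i => gs (ws i))) := by
    have h1 : gs x ∈ (Algebra.adjoin (ZMod 2) (Set.range ws)).map gs :=
      ⟨x, hxp, rfl⟩
    rw [AlgHom.map_adjoin] at h1
    rwa [show Set.range (fun i => gs (ws i)) = gs '' Set.range ws from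
      (Set.range_comp gs ws)]
  exact spherical_core S k hk1 hSdim hSlow (fun i => gs (ws i))
    hwmem (by show gs (ws 0) = 1; rw [hw0, map_one]) hwk (gs x) hgxk hgx hmem

/-- Proposition 2.8: if `x ∈ H^k(X; Z/2)` is spherical and
`k ∉ {1,2,4,8}`, then no bundle `ξ` on `X` has `w_k(ξ) = x`, every bundle has
`charrank_X(ξ) < k`, and for any covering `π : E → X` one has
`ucharrank E < k`. -/
theorem statement10 {A A' : Type} [CommRing A] [Algebra (ZMod 2) A]
    [CommRing A'] [Algebra (ZMod 2) A']
    (k : ℕ) (hk : k ∉ ({1, 2, 4, 8} : Set ℕ))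
    (X : CohomSpace A) (B : BundleTheory X)
    -- the sphere `S^k`
    (S : CohomSpace A') (hSdim : S.dim = k)
    (hSlow : ∀ j, 0 < j → j < k → S.H j = ⊥)
    (BS : BundleTheory S)
    -- Atiyah–Hirzebruch: no bundle on `S^k` has `w_k ≠ 0` as `k ∉ {1,2,4,8}`
    (hAH : ∀ η : BS.VB, BS.w η k = 0)
    -- a spherical class `x`: a map `f : S^k → X` with `f*(x) ≠ 0`
    (x : A) (hx : x ∈ X.H k)
    (fstar : A →ₐ[ZMod 2] A') (hfH : ∀ i, ∀ y ∈ X.H i, fstar y ∈ S.H i)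
    (hfx : fstar x ≠ 0)
    -- pullback of bundles along `f`
    (fP : B.VB → BS.VB) (hfP : ∀ ξ i, BS.w (fP ξ) i = fstar (B.w ξ i)) :
    (∀ ξ : B.VB, B.w ξ k ≠ x) ∧
    (∀ ξ : B.VB, charrank X (B.w ξ) < k) ∧
    -- for any covering `π : E → X`, through which `f` lifts as `f = π ∘ g`
    (∀ (A'' : Type) [CommRing A''] [Algebra (ZMod 2) A'']
      (E : CohomSpace A'') (BE : BundleTheory E)
      (pstar : A →ₐ[ZMod 2] A'')   -- `π* : H^*(X) → H^*(E)`
      (gstar : A'' →ₐ[ZMod 2] A'), -- `g* : H^*(E) → H^*(S^k)` for the lift `g`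
      (∀ i, ∀ y ∈ X.H i, pstar y ∈ E.H i) →
      (∀ i, ∀ z ∈ E.H i, gstar z ∈ S.H i) →
      gstar.comp pstar = fstar →
      ∀ (gP : BE.VB → BS.VB), (∀ η i, BS.w (gP η) i = gstar (BE.w η i)) →
      ucharrank E BE < k) := by
  obtain ⟨η₀⟩ := BS.nonempty
  have hk1 : 1 ≤ k := by
    by_contra h
    have hk0 : k = 0 := by omega
    have h10 : (1 : A') = 0 := (BS.w_zero η₀).symm.trans (hk0 ▸ hAH η₀)
    exact hfx (by rw [← mul_one (fstar x), h10, mul_zero])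
  refine ⟨?_, ?_, ?_⟩
  · intro ξ hw
    exact hfx (by rw [← hw, ← hfP, hAH])
  · intro ξ
    refine lt_of_le_of_lt (csSup_le' ?_) (Nat.sub_lt hk1 one_pos)
    rintro m ⟨-, hm⟩
    by_contra h
    have hkm : k ≤ m := by omega
    exact spherical_key S k hk1 hSdim hSlow fstar (B.w ξ)
      (fun i => hfH i _ (B.w_mem ξ i)) (B.w_zero ξ)
      (by rw [← hfP ξ k, hAH]) x hfx (hfH k x hx) (hm k hkm x hx)
  · intro A'' _ _ E BE pstar gstar hpH hgH hcomp gP hgP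
    have hpx : gstar (pstar x) = fstar x := by
      rw [← hcomp]; rfl
    refine lt_of_le_of_lt (csSup_le' ?_) (Nat.sub_lt hk1 one_pos)
    rintro m ⟨η, rfl⟩
    refine le_trans (csSup_le' ?_) le_rfl
    rintro m ⟨-, hm⟩
    by_contra h
    have hkm : k ≤ m := by omega
    exact spherical_key S k hk1 hSdim hSlow gstar (BE.w η)
      (fun i => hgH i _ (BE.w_mem η i)) (BE.w_zero η)
      (by rw [← hgP η k, hAH]) (pstar x) (by rw [hpx]; exact hfx)
      (hpx ▸ hgH k _ (hpH k x hx)) (hm k hkm _ (hpH k x hx))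
end

section
/- Let X be a connected closed smooth d-manifold and let r_X be the least positive degree with nonzero reduced Z/2-cohomology; assume 2·r_X ≤ d. Then for every real vector bundle ξ over X, either charrank_X(ξ) = d or charrank_X(ξ) < d − r_X. -/
/-! An abstract framework for the mod-2 cohomology ring of a connected finite
CW-complex, Stiefel–Whitney classes of real vector bundles, characteristic rank
and cup-length, following Naolekar–Thakur,
"Note on the characteristic rank of vector bundles". -/

variable (A : Type) [CommRing A] [Algebra (ZMod 2) A]

variable {A}

/-- Theorem 2.10: on a closed connected `d`-manifold with
`2 r_X ≤ d`, every bundle has characteristic rank either `d` or `< d - r_X`. -/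
theorem statement11 {A : Type} [CommRing A] [Algebra (ZMod 2) A]
    (X : CohomSpace A) (pd : PoincareDual X)
    (hfund : ∃ μ : A, μ ≠ 0 ∧ X.H X.dim = Submodule.span (ZMod 2) {μ})
    (r : ℕ) (hr : IsRX X r) (h2r : 2 * r ≤ X.dim)
    (B : BundleTheory X) (ξ : B.VB) :
    charrank X (B.w ξ) = X.dim ∨ charrank X (B.w ξ) < X.dim - r := by

  rcases lt_or_ge (charrank X (B.w ξ)) (X.dim - r) with h | h
  · exact Or.inr h
  left
  set w := B.w ξ with hw
  set S := {k | k ≤ X.dim ∧ ∀ j ≤ k, ∀ x ∈ X.H j, IsPolyIn w x} with hS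
  have h0S : 0 ∈ S := by
    refine ⟨Nat.zero_le _, ?_⟩
    intro j hj x hx
    interval_cases j
    rw [X.h0] at hx
    obtain ⟨c, hc⟩ := Submodule.mem_span_singleton.mp hx
    rw [← hc]
    exact Subalgebra.smul_mem _ (one_mem _) c
  have hbdd : BddAbove S := ⟨X.dim, fun k hk => hk.1⟩
  have hmem : charrank X w ∈ S := Nat.sSup_mem ⟨0, h0S⟩ hbdd
  have hrd : r ≤ X.dim := by omega
  have hrdr : r ≤ X.dim - r := by omega
  -- μ is a polynomial
  obtain ⟨μ, hμ0, hμspan⟩ := hfund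
  obtain ⟨x, hxr, hx0⟩ := Submodule.exists_mem_ne_zero_of_ne_bot hr.2.1
  obtain ⟨y, hyr, hxy0⟩ := pd r hrd x hxr hx0
  have hxpoly : IsPolyIn w x := hmem.2 r (le_trans hrdr h) x hxr
  have hypoly : IsPolyIn w y := hmem.2 (X.dim - r) h y hyr
  have hxyH : x * y ∈ X.H X.dim := by
    have := X.mul_mem hxr hyr
    rwa [Nat.add_sub_cancel' hrd] at this
  have hμpoly : IsPolyIn w μ := by
    rw [hμspan] at hxyH
    obtain ⟨c, hc⟩ := Submodule.mem_span_singleton.mp hxyH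
    have hc1 : c = 1 := by
      fin_cases c
      · exfalso; apply hxy0; rw [← hc]; exact zero_smul (ZMod 2) μ
      · rfl
    rw [hc1, one_smul] at hc
    rw [hc]
    exact mul_mem hxpoly hypoly
  have hdS : X.dim ∈ S := by
    refine ⟨le_refl _, ?_⟩
    intro j hj z hz
    rcases le_or_gt j (X.dim - r) with hjle | hjgt
    · exact hmem.2 j (le_trans hjle h) z hz
    rcases eq_or_lt_of_le hj with hjd | hjd
    · subst hjd
      rw [hμspan] at hz
      obtain ⟨c, hc⟩ := Submodule.mem_span_singleton.mp hz
      rw [← hc]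
      exact Subalgebra.smul_mem _ hμpoly c
    · -- X.dim - r < j < X.dim: H j = ⊥
      by_contra hzpoly
      have hz0 : z ≠ 0 := by
        rintro rfl
        exact hzpoly (zero_mem _)
      obtain ⟨u, huH, hzu⟩ := pd j (le_of_lt hjd) z hz hz0
      have : X.H (X.dim - j) = ⊥ := hr.2.2 _ (by omega) (by omega)
      rw [this, Submodule.mem_bot] at huH
      rw [huH, mul_zero] at hzu
      exact hzu rfl
  have h1 : charrank X w = sSup S := rfl
  rw [h1]
  exact le_antisymm (csSup_le ⟨0, h0S⟩ fun k hk => hk.1) (le_csSup hbdd hdS)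
end

section
/- Let X be a connected closed smooth d-manifold with 2·r_X ≤ d that is an unoriented boundary (its unoriented cobordism class is zero). Then charrank(X) := charrank_X(TX) < d − r_X. -/
/-! An abstract framework for the mod-2 cohomology ring of a connected finite
CW-complex, Stiefel–Whitney classes of real vector bundles, characteristic rank
and cup-length, following Naolekar–Thakur,
"Note on the characteristic rank of vector bundles". -/

variable (A : Type) [CommRing A] [Algebra (ZMod 2) A]

variable {A}

/-- Corollary 2.11: a closed connected `d`-manifold with
`2 r_X ≤ d` that bounds unorientedly (so every degree-`d` monomial in the
Stiefel–Whitney classes of its tangent bundle vanishes) has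
`charrank X = charrank_X(TX) < d - r_X`. -/
theorem statement12 {A : Type} [CommRing A] [Algebra (ZMod 2) A]
    (X : CohomSpace A) (pd : PoincareDual X)
    (hfund : ∃ μ : A, μ ≠ 0 ∧ X.H X.dim = Submodule.span (ZMod 2) {μ})
    (r : ℕ) (hr : IsRX X r) (h2r : 2 * r ≤ X.dim)
    -- the Stiefel–Whitney classes of the tangent bundle `TX`
    (wT : ℕ → A) (hwT : ∀ i, wT i ∈ X.H i) (hwT0 : wT 0 = 1)
    -- `X` is an unoriented boundary: all Stiefel–Whitney numbers vanish
    (hbound : ∀ s : Multiset ℕ, (∀ i ∈ s, 1 ≤ i) → s.sum = X.dim →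
      (s.map wT).prod = 0) :
    charrank X wT < X.dim - r := by
  by_contra hlt
  push_neg at hlt
  set d := X.dim with hd
  obtain ⟨μ, hμ0, hμspan⟩ := hfund
  obtain ⟨hr1, hrne, hrlow⟩ := hr
  have hone : (1 : A) ∈ X.H 0 := by
    rw [X.h0]; exact Submodule.mem_span_singleton_self 1
  -- the set defining charrank
  set S : Set ℕ := {k | k ≤ X.dim ∧ ∀ j ≤ k, ∀ x ∈ X.H j, IsPolyIn wT x} with hS
  have hS0 : (0 : ℕ) ∈ S := by
    refine ⟨Nat.zero_le _, ?_⟩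
    intro j hj x hx
    interval_cases j
    rw [X.h0, Submodule.mem_span_singleton] at hx
    obtain ⟨c, rfl⟩ := hx
    exact Subalgebra.smul_mem _ (Subalgebra.one_mem _) c
  have hbdd : BddAbove S := ⟨X.dim, fun k hk => hk.1⟩
  have hmem : charrank X wT ∈ S := Nat.sSup_mem ⟨0, hS0⟩ hbdd
  have hpoly : ∀ j ≤ d - r, ∀ x ∈ X.H j, IsPolyIn wT x :=
    fun j hj => hmem.2 j (le_trans hj hlt)
  obtain ⟨a, haH, ha0⟩ := (Submodule.ne_bot_iff (X.H r)).mp hrne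
  have hrd : r ≤ d := le_trans (by omega) h2r
  obtain ⟨b, hbH, hab0⟩ := pd r hrd a haH ha0
  have habH : a * b ∈ X.H d := by
    have := X.mul_mem haH hbH
    rwa [Nat.add_sub_cancel' hrd] at this
  rw [hμspan, Submodule.mem_span_singleton] at habH
  obtain ⟨c, hc⟩ := habH
  have hcne : c ≠ 0 := by
    rintro rfl
    rw [zero_smul] at hc
    exact hab0 hc.symm
  have hc1 : c = 1 := by
    have : ∀ c : ZMod 2, c = 0 ∨ c = 1 := by decide
    have := this c
    tauto
  have hμab : μ = a * b := by rw [← hc, hc1, one_smul]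
  have hμpoly : IsPolyIn wT μ := by
    rw [hμab]
    exact Subalgebra.mul_mem _ (hpoly r (by omega) a haH) (hpoly (d - r) le_rfl b hbH)
  -- products of Stiefel–Whitney classes over a list lie in the right degree
  have hprodmem : ∀ l : List ℕ, (l.map wT).prod ∈ X.H l.sum := by
    intro l
    induction l with
    | nil => simpa using hone
    | cons i t ih => simpa using X.mul_mem (hwT i) ih
  have hclosure : (Submonoid.closure (Set.range wT) : Set A) ⊆
      ↑(⨆ (n : ℕ) (_ : n ≠ d), X.H n) := by
    intro x hx
    have hx' : ∃ l : List ℕ, (∀ i ∈ l, 1 ≤ i) ∧ x = (l.map wT).prod := by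
      induction hx using Submonoid.closure_induction with
      | mem y hy =>
        obtain ⟨i, rfl⟩ := hy
        by_cases hi : i = 0
        · exact ⟨[], by simp, by simp [hi, hwT0]⟩
        · exact ⟨[i], by simpa using Nat.one_le_iff_ne_zero.mpr hi, by simp⟩
      | one => exact ⟨[], by simp, by simp⟩
      | mul y z _ _ ihy ihz =>
        obtain ⟨ly, hly, rfl⟩ := ihy
        obtain ⟨lz, hlz, rfl⟩ := ihz
        refine ⟨ly ++ lz, ?_, by simp⟩
        intro i hi
        rcases List.mem_append.mp hi with h | h
        · exact hly i h
        · exact hlz i h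
    obtain ⟨l, hlpos, rfl⟩ := hx'
    by_cases hsum : l.sum = d
    · have : ((l : Multiset ℕ).map wT).prod = 0 := by
        apply hbound
        · simpa using hlpos
        · simpa using hsum
      have hz : (l.map wT).prod = 0 := by simpa using this
      rw [hz]
      exact Submodule.zero_mem _
    · exact Submodule.mem_iSup_of_mem l.sum
        (Submodule.mem_iSup_of_mem hsum (hprodmem l))
  have hμsup : μ ∈ ⨆ (n : ℕ) (_ : n ≠ d), X.H n := by
    have hμsp : μ ∈ Submodule.span (ZMod 2)
        ((Submonoid.closure (Set.range wT) : Submonoid A) : Set A) := by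
      have h := Algebra.adjoin_eq_span (ZMod 2) (Set.range wT)
      have hμ' : μ ∈ Subalgebra.toSubmodule (Algebra.adjoin (ZMod 2) (Set.range wT)) :=
        hμpoly
      rwa [h] at hμ'
    exact Submodule.span_le.mpr hclosure hμsp
  have hμHd : μ ∈ X.H d := by
    rw [hμspan]; exact Submodule.mem_span_singleton_self μ
  have : μ = 0 := Submodule.disjoint_def.mp (X.indep d) μ hμHd hμsup
  exact hμ0 this
end

section
/- For X = S^d × S^m with 1 ≤ d < m: ucharrank(X) = d − 1 if d ∉ {1,2,4,8}; ucharrank(X) = m − 1 if d ∈ {1,2,4,8} and m ∉ {2,4,8}; and ucharrank(X) = d + m if both d and m lie in {1,2,4,8}. Moreover, if d = m then ucharrank(S^d × S^d) = d − 1. -/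
/-! An abstract framework for the mod-2 cohomology ring of a connected finite
CW-complex, Stiefel–Whitney classes of real vector bundles, characteristic rank
and cup-length, following Naolekar–Thakur,
"Note on the characteristic rank of vector bundles". -/

variable (A : Type) [CommRing A] [Algebra (ZMod 2) A]

variable {A}

/-! ### Auxiliary lemmas -/

section Aux

variable {A : Type} [CommRing A] [Algebra (ZMod 2) A]

lemma adjoin_le_submodule (w : ℕ → A) (S : Submodule (ZMod 2) A)
    (h1 : (1 : A) ∈ S) (hw : ∀ j, w j ∈ S)
    (hmul : ∀ x ∈ S, ∀ y ∈ S, x * y ∈ S) :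
    ∀ x, IsPolyIn w x → x ∈ S := by
  intro x hx
  induction hx using Algebra.adjoin_induction with
  | mem y hy => obtain ⟨j, rfl⟩ := hy; exact hw j
  | algebraMap r =>
      have h : (algebraMap (ZMod 2) A) r = r • (1 : A) := by
        rw [Algebra.smul_def, mul_one]
      rw [h]; exact S.smul_mem r h1
  | add x y hx hy ihx ihy => exact S.add_mem ihx ihy
  | mul x y hx hy ihx ihy => exact hmul x ihx y ihy

lemma span_mul_closed (s : Set A)
    (h : ∀ a ∈ s, ∀ b ∈ s, a * b ∈ Submodule.span (ZMod 2) s) :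
    ∀ x ∈ Submodule.span (ZMod 2) s, ∀ y ∈ Submodule.span (ZMod 2) s,
      x * y ∈ Submodule.span (ZMod 2) s := by
  intro x hx y hy
  have hxy := Submodule.mul_mem_mul hx hy
  rw [Submodule.span_mul_span] at hxy
  refine Submodule.span_le.2 ?_ hxy
  rintro z ⟨a, ha, b, hb, rfl⟩
  exact h a ha b hb

lemma isPolyIn_of_mem_span {w : ℕ → A} {s : Set A} (hs : ∀ y ∈ s, IsPolyIn w y)
    {x : A} (hx : x ∈ Submodule.span (ZMod 2) s) : IsPolyIn w x := by
  induction hx using Submodule.span_induction with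
  | mem y hy => exact hs y hy
  | zero => exact zero_mem _
  | add a b _ _ iha ihb => exact add_mem iha ihb
  | smul c x _ ih => exact Subalgebra.smul_mem _ ih c

lemma charrank_eq_of (X : CohomSpace A) (w : ℕ → A) (k : ℕ)
    (hmem : k ≤ X.dim ∧ ∀ j ≤ k, ∀ x ∈ X.H j, IsPolyIn w x)
    (hub : ∀ k', k' ≤ X.dim → (∀ j ≤ k', ∀ x ∈ X.H j, IsPolyIn w x) → k' ≤ k) :
    charrank X w = k :=
  le_antisymm (csSup_le' fun k' hk' => hub k' hk'.1 hk'.2)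
    (le_csSup ⟨X.dim, fun k' hk' => hk'.1⟩ hmem)

lemma charrank_le_of (X : CohomSpace A) (w : ℕ → A) (k : ℕ)
    (hub : ∀ k', k' ≤ X.dim → (∀ j ≤ k', ∀ x ∈ X.H j, IsPolyIn w x) → k' ≤ k) :
    charrank X w ≤ k :=
  csSup_le' fun k' hk' => hub k' hk'.1 hk'.2

lemma ucharrank_eq_of (X : CohomSpace A) (B : BundleTheory X) (k : ℕ)
    (ξ₀ : B.VB) (h₀ : charrank X (B.w ξ₀) = k)
    (hub : ∀ ξ, charrank X (B.w ξ) ≤ k) : ucharrank X B = k :=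
  le_antisymm (csSup_le' (by rintro _ ⟨ξ, rfl⟩; exact hub ξ))
    (le_csSup ⟨k, by rintro _ ⟨ξ, rfl⟩; exact hub ξ⟩ ⟨ξ₀, h₀⟩)

end Aux

/-- Lemma 4.1: the upper characteristic rank of
`S^d × S^m`. -/
theorem statement13 {A : Type} [CommRing A] [Algebra (ZMod 2) A]
    (d m : ℕ) (hd : 1 ≤ d) (hdm : d ≤ m)
    -- `X = S^d × S^m`, with Künneth generators `u`, `v`
    (X : CohomSpace A) (hdim : X.dim = d + m)
    (u v : A) (hu : u ∈ X.H d) (hv : v ∈ X.H m)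
    (hu0 : u ≠ 0) (hv0 : v ≠ 0) (huv : u * v ≠ 0) (huvne : u ≠ v)
    (hu2 : u * u = 0) (hv2 : v * v = 0)
    (hH : ∀ j, 0 < j → X.H j = Submodule.span (ZMod 2)
      {x | (x = u ∧ j = d) ∨ (x = v ∧ j = m) ∨ (x = u * v ∧ j = d + m)})
    (B : BundleTheory X)
    -- Atiyah–Hirzebruch via restriction to the sphere factors
    (hAHd : d ∉ ({1, 2, 4, 8} : Set ℕ) → ∀ ξ : B.VB, B.w ξ d = 0)
    (hAHm : m ∉ ({1, 2, 4, 8} : Set ℕ) → ∀ ξ : B.VB, B.w ξ m = 0)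
    -- pullbacks of the Hopf bundles
    (hHopfd : d ∈ ({1, 2, 4, 8} : Set ℕ) → ∃ ξ : B.VB, B.w ξ d = u)
    (hHopfdm : d ∈ ({1, 2, 4, 8} : Set ℕ) → m ∈ ({1, 2, 4, 8} : Set ℕ) → d < m →
      ∃ ξ : B.VB, B.w ξ d = u ∧ B.w ξ m = v ∧ B.w ξ (d + m) = u * v) :
    (d < m → d ∉ ({1, 2, 4, 8} : Set ℕ) → ucharrank X B = d - 1) ∧
    (d < m → d ∈ ({1, 2, 4, 8} : Set ℕ) → m ∉ ({2, 4, 8} : Set ℕ) →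
      ucharrank X B = m - 1) ∧
    (d < m → d ∈ ({1, 2, 4, 8} : Set ℕ) → m ∈ ({1, 2, 4, 8} : Set ℕ) →
      ucharrank X B = d + m) ∧
    (d = m → ucharrank X B = d - 1) := by
  have hm1 : 1 ≤ m := le_trans hd hdm
  have Hbot : ∀ j, 0 < j → j ≠ d → j ≠ m → j ≠ d + m → X.H j = ⊥ := by
    intro j hj h1 h2 h3
    rw [hH j hj, Submodule.span_eq_bot]
    rintro x (⟨rfl, h⟩ | ⟨rfl, h⟩ | ⟨rfl, h⟩)
    · exact absurd h h1
    · exact absurd h h2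
    · exact absurd h h3
  have h1H0 : (1 : A) ∈ X.H 0 := by
    rw [X.h0]; exact Submodule.mem_span_singleton_self 1
  have poly0 : ∀ (w : ℕ → A), ∀ x ∈ X.H 0, IsPolyIn w x := by
    intro w x hx
    rw [X.h0, Submodule.mem_span_singleton] at hx
    obtain ⟨c, rfl⟩ := hx
    exact Subalgebra.smul_mem _ (one_mem _) c
  have memSup : ∀ (i j : ℕ), j ≠ i → ∀ x ∈ X.H j,
      x ∈ ⨆ (k) (_ : k ≠ i), X.H k := by
    intro i j hj x hx
    exact Submodule.mem_iSup_of_mem j (Submodule.mem_iSup_of_mem hj hx)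
  have notMem : ∀ (i : ℕ) (x : A), x ∈ X.H i → x ≠ 0 → ∀ s : Set A,
      (∀ y ∈ s, ∃ j, j ≠ i ∧ y ∈ X.H j) → x ∉ Submodule.span (ZMod 2) s := by
    intro i x hx hx0 s hs hmem
    have hle : Submodule.span (ZMod 2) s ≤ ⨆ (k) (_ : k ≠ i), X.H k := by
      rw [Submodule.span_le]
      intro y hy
      obtain ⟨j, hj, hyj⟩ := hs y hy
      exact memSup i j hj y hyj
    exact hx0 (Submodule.disjoint_def.1 (X.indep i) x hx (hle hmem))
  have wmul0 : ∀ (ξ : B.VB) (i j : ℕ), 0 < i + j → i + j ≠ d → i + j ≠ m →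
      i + j ≠ d + m → B.w ξ i * B.w ξ j = 0 := by
    intro ξ i j h0 h1 h2 h3
    have hm' := X.mul_mem (B.w_mem ξ i) (B.w_mem ξ j)
    rwa [Hbot _ h0 h1 h2 h3, Submodule.mem_bot] at hm'
  refine ⟨?_, ?_, ?_, ?_⟩
  -- Case 1 : d < m, d ∉ {1,2,4,8}
  · intro hlt hd4
    have hwcr : ∀ ξ : B.VB, charrank X (B.w ξ) = d - 1 := by
      intro ξ
      set s : Set A := {1, B.w ξ m, B.w ξ (d + m)} with hs
      have hgen1 : (1 : A) ∈ Submodule.span (ZMod 2) s :=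
        Submodule.subset_span (by simp [hs])
      have hgenm : B.w ξ m ∈ Submodule.span (ZMod 2) s :=
        Submodule.subset_span (by simp [hs])
      have hgendm : B.w ξ (d + m) ∈ Submodule.span (ZMod 2) s :=
        Submodule.subset_span (by simp [hs])
      have hwS : ∀ j, B.w ξ j ∈ Submodule.span (ZMod 2) s := by
        intro j
        rcases eq_or_ne j 0 with rfl | hj0
        · rw [B.w_zero]; exact hgen1
        rcases eq_or_ne j d with rfl | hjd
        · rw [hAHd hd4 ξ]; exact zero_mem _
        rcases eq_or_ne j m with rfl | hjm
        · exact hgenm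
        rcases eq_or_ne j (d + m) with rfl | hjdm
        · exact hgendm
        have hb := Hbot j (Nat.pos_of_ne_zero hj0) hjd hjm hjdm
        have hj := B.w_mem ξ j
        rw [hb, Submodule.mem_bot] at hj
        rw [hj]; exact zero_mem _
      have hmulS := span_mul_closed s (by
        intro a ha b hb
        simp only [hs, Set.mem_insert_iff, Set.mem_singleton_iff] at ha hb
        rcases ha with rfl | rfl | rfl
        · rw [one_mul]
          rcases hb with rfl | rfl | rfl
          exacts [hgen1, hgenm, hgendm]
        · rcases hb with rfl | rfl | rfl
          · rw [mul_one]; exact hgenm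
          · rw [wmul0 ξ m m (by omega) (by omega) (by omega) (by omega)]
            exact zero_mem _
          · rw [wmul0 ξ m (d + m) (by omega) (by omega) (by omega) (by omega)]
            exact zero_mem _
        · rcases hb with rfl | rfl | rfl
          · rw [mul_one]; exact hgendm
          · rw [wmul0 ξ (d + m) m (by omega) (by omega) (by omega) (by omega)]
            exact zero_mem _
          · rw [wmul0 ξ (d + m) (d + m) (by omega) (by omega) (by omega) (by omega)]
            exact zero_mem _)
      have hadj := adjoin_le_submodule (B.w ξ) _ hgen1 hwS hmulS
      have hnotu : ¬ IsPolyIn (B.w ξ) u := by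
        intro hp
        refine notMem d u hu hu0 s ?_ (hadj u hp)
        intro y hy
        simp only [hs, Set.mem_insert_iff, Set.mem_singleton_iff] at hy
        rcases hy with rfl | rfl | rfl
        · exact ⟨0, by omega, h1H0⟩
        · exact ⟨m, by omega, B.w_mem ξ m⟩
        · exact ⟨d + m, by omega, B.w_mem ξ (d + m)⟩
      refine charrank_eq_of X (B.w ξ) (d - 1) ⟨by omega, ?_⟩ ?_
      · intro j hj x hx
        rcases Nat.eq_zero_or_pos j with rfl | hj0
        · exact poly0 _ x hx
        · rw [Hbot j hj0 (by omega) (by omega) (by omega), Submodule.mem_bot] at hx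
          rw [hx]; exact zero_mem _
      · intro k' hk' hp
        by_contra hc
        exact hnotu (hp d (by omega) u hu)
    exact ucharrank_eq_of X B (d - 1) B.nonempty.some (hwcr _)
      (fun ξ => le_of_eq (hwcr ξ))
  -- Case 2 : d < m, d ∈ {1,2,4,8}, m ∉ {2,4,8}
  · intro hlt hd4 hm4
    have hm4' : m ∉ ({1, 2, 4, 8} : Set ℕ) := by
      intro hmem
      apply hm4
      simp only [Set.mem_insert_iff, Set.mem_singleton_iff] at hmem ⊢
      omega
    have hHd : X.H d = Submodule.span (ZMod 2) {u} := by
      rw [hH d (by omega)]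
      congr 1
      ext x
      simp only [Set.mem_setOf_eq, Set.mem_singleton_iff]
      constructor
      · rintro (⟨rfl, _⟩ | ⟨rfl, h⟩ | ⟨rfl, h⟩)
        · rfl
        · exact absurd h (by omega)
        · exact absurd h (by omega)
      · rintro rfl; exact Or.inl ⟨rfl, trivial⟩
    have hub : ∀ ξ : B.VB, ∀ k', k' ≤ X.dim →
        (∀ j ≤ k', ∀ x ∈ X.H j, IsPolyIn (B.w ξ) x) → k' ≤ m - 1 := by
      intro ξ
      set s : Set A := {1, B.w ξ d, B.w ξ (d + m)} with hs
      have hgen1 : (1 : A) ∈ Submodule.span (ZMod 2) s :=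
        Submodule.subset_span (by simp [hs])
      have hgend : B.w ξ d ∈ Submodule.span (ZMod 2) s :=
        Submodule.subset_span (by simp [hs])
      have hgendm : B.w ξ (d + m) ∈ Submodule.span (ZMod 2) s :=
        Submodule.subset_span (by simp [hs])
      have hwS : ∀ j, B.w ξ j ∈ Submodule.span (ZMod 2) s := by
        intro j
        rcases eq_or_ne j 0 with rfl | hj0
        · rw [B.w_zero]; exact hgen1
        rcases eq_or_ne j d with rfl | hjd
        · exact hgend
        rcases eq_or_ne j m with rfl | hjm
        · rw [hAHm hm4' ξ]; exact zero_mem _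
        rcases eq_or_ne j (d + m) with rfl | hjdm
        · exact hgendm
        have hb := Hbot j (Nat.pos_of_ne_zero hj0) hjd hjm hjdm
        have hj := B.w_mem ξ j
        rw [hb, Submodule.mem_bot] at hj
        rw [hj]; exact zero_mem _
      have hwd2 : B.w ξ d * B.w ξ d = 0 := by
        have hmem := B.w_mem ξ d
        rw [hHd, Submodule.mem_span_singleton] at hmem
        obtain ⟨c, hc⟩ := hmem
        rw [← hc, smul_mul_assoc, mul_smul_comm, hu2, smul_zero, smul_zero]
      have hmulS := span_mul_closed s (by
        intro a ha b hb
        simp only [hs, Set.mem_insert_iff, Set.mem_singleton_iff] at ha hb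
        rcases ha with rfl | rfl | rfl
        · rw [one_mul]
          rcases hb with rfl | rfl | rfl
          exacts [hgen1, hgend, hgendm]
        · rcases hb with rfl | rfl | rfl
          · rw [mul_one]; exact hgend
          · rw [hwd2]; exact zero_mem _
          · rw [wmul0 ξ d (d + m) (by omega) (by omega) (by omega) (by omega)]
            exact zero_mem _
        · rcases hb with rfl | rfl | rfl
          · rw [mul_one]; exact hgendm
          · rw [wmul0 ξ (d + m) d (by omega) (by omega) (by omega) (by omega)]
            exact zero_mem _
          · rw [wmul0 ξ (d + m) (d + m) (by omega) (by omega) (by omega) (by omega)]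
            exact zero_mem _)
      have hadj := adjoin_le_submodule (B.w ξ) _ hgen1 hwS hmulS
      have hnotv : ¬ IsPolyIn (B.w ξ) v := by
        intro hp
        refine notMem m v hv hv0 s ?_ (hadj v hp)
        intro y hy
        simp only [hs, Set.mem_insert_iff, Set.mem_singleton_iff] at hy
        rcases hy with rfl | rfl | rfl
        · exact ⟨0, by omega, h1H0⟩
        · exact ⟨d, by omega, B.w_mem ξ d⟩
        · exact ⟨d + m, by omega, B.w_mem ξ (d + m)⟩
      intro k' hk' hp
      by_contra hc
      exact hnotv (hp m (by omega) v hv)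
    obtain ⟨ξ₀, hξ₀⟩ := hHopfd hd4
    have hcr₀ : charrank X (B.w ξ₀) = m - 1 := by
      refine charrank_eq_of X (B.w ξ₀) (m - 1) ⟨by omega, ?_⟩ (hub ξ₀)
      intro j hj x hx
      rcases Nat.eq_zero_or_pos j with rfl | hj0
      · exact poly0 _ x hx
      rcases eq_or_ne j d with rfl | hjd
      · rw [hHd] at hx
        refine isPolyIn_of_mem_span ?_ hx
        rintro y rfl
        rw [← hξ₀]
        exact Algebra.subset_adjoin ⟨_, rfl⟩
      · rw [Hbot j hj0 hjd (by omega) (by omega), Submodule.mem_bot] at hx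
        rw [hx]; exact zero_mem _
    exact ucharrank_eq_of X B (m - 1) ξ₀ hcr₀
      (fun ξ => charrank_le_of X (B.w ξ) (m - 1) (hub ξ))
  -- Case 3 : d < m, both ∈ {1,2,4,8}
  · intro hlt hd4 hm4
    obtain ⟨ξ, hξd, hξm, hξdm⟩ := hHopfdm hd4 hm4 hlt
    have hcr : charrank X (B.w ξ) = d + m := by
      refine charrank_eq_of X (B.w ξ) (d + m) ⟨by omega, ?_⟩
        (fun k' hk' _ => by omega)
      intro j hj x hx
      rcases Nat.eq_zero_or_pos j with rfl | hj0
      · exact poly0 _ x hx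
      rw [hH j hj0] at hx
      refine isPolyIn_of_mem_span ?_ hx
      rintro y (⟨rfl, _⟩ | ⟨rfl, _⟩ | ⟨rfl, _⟩)
      · rw [← hξd]; exact Algebra.subset_adjoin ⟨d, rfl⟩
      · rw [← hξm]; exact Algebra.subset_adjoin ⟨m, rfl⟩
      · rw [← hξdm]; exact Algebra.subset_adjoin ⟨d + m, rfl⟩
    exact ucharrank_eq_of X B (d + m) ξ hcr
      (fun ξ' => charrank_le_of X (B.w ξ') (d + m) (fun k' hk' _ => by omega))
  -- Case 4 : d = m
  · intro heq
    subst m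
    have hHd2 : X.H d = Submodule.span (ZMod 2) {u, v} := by
      rw [hH d (by omega)]
      congr 1
      ext x
      simp only [Set.mem_setOf_eq, Set.mem_insert_iff, Set.mem_singleton_iff]
      constructor
      · rintro (⟨rfl, _⟩ | ⟨rfl, _⟩ | ⟨rfl, h⟩)
        · exact Or.inl rfl
        · exact Or.inr rfl
        · exact absurd h (by omega)
      · rintro (rfl | rfl)
        · exact Or.inl ⟨rfl, trivial⟩
        · exact Or.inr (Or.inl ⟨rfl, trivial⟩)
    have h2 : ∀ y : A, y + y = 0 := by
      intro y
      have h : ((1 : ZMod 2) + 1) • y = y + y := by rw [add_smul, one_smul]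
      rw [← h, show (1 : ZMod 2) + 1 = 0 by decide, zero_smul]
    have hsq : ∀ x ∈ X.H d, x * x = 0 := by
      intro x hx
      rw [hHd2, Submodule.mem_span_pair] at hx
      obtain ⟨a, b, rfl⟩ := hx
      rw [mul_add, add_mul, add_mul, smul_mul_assoc, smul_mul_assoc,
        smul_mul_assoc, smul_mul_assoc, mul_smul_comm, mul_smul_comm,
        mul_smul_comm, mul_smul_comm, hu2, hv2, mul_comm v u,
        smul_zero, smul_zero, smul_zero, smul_zero, zero_add, add_zero,
        smul_comm b a]
      exact h2 _
    have hbcase : ∀ c : ZMod 2, c = 0 ∨ c = 1 := by decide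
    have hwcr : ∀ ξ : B.VB, charrank X (B.w ξ) = d - 1 := by
      intro ξ
      set s : Set A := {1, B.w ξ d, B.w ξ (d + d)} with hs
      have hgen1 : (1 : A) ∈ Submodule.span (ZMod 2) s :=
        Submodule.subset_span (by simp [hs])
      have hgend : B.w ξ d ∈ Submodule.span (ZMod 2) s :=
        Submodule.subset_span (by simp [hs])
      have hgendd : B.w ξ (d + d) ∈ Submodule.span (ZMod 2) s :=
        Submodule.subset_span (by simp [hs])
      have hwS : ∀ j, B.w ξ j ∈ Submodule.span (ZMod 2) s := by
        intro j
        rcases eq_or_ne j 0 with rfl | hj0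
        · rw [B.w_zero]; exact hgen1
        rcases eq_or_ne j d with rfl | hjd
        · exact hgend
        rcases eq_or_ne j (d + d) with rfl | hjdd
        · exact hgendd
        have hb := Hbot j (Nat.pos_of_ne_zero hj0) hjd hjd hjdd
        have hj := B.w_mem ξ j
        rw [hb, Submodule.mem_bot] at hj
        rw [hj]; exact zero_mem _
      have hmulS := span_mul_closed s (by
        intro a ha b hb
        simp only [hs, Set.mem_insert_iff, Set.mem_singleton_iff] at ha hb
        rcases ha with rfl | rfl | rfl
        · rw [one_mul]
          rcases hb with rfl | rfl | rfl
          exacts [hgen1, hgend, hgendd]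
        · rcases hb with rfl | rfl | rfl
          · rw [mul_one]; exact hgend
          · rw [hsq _ (B.w_mem ξ d)]; exact zero_mem _
          · rw [wmul0 ξ d (d + d) (by omega) (by omega) (by omega) (by omega)]
            exact zero_mem _
        · rcases hb with rfl | rfl | rfl
          · rw [mul_one]; exact hgendd
          · rw [wmul0 ξ (d + d) d (by omega) (by omega) (by omega) (by omega)]
            exact zero_mem _
          · rw [wmul0 ξ (d + d) (d + d) (by omega) (by omega) (by omega) (by omega)]
            exact zero_mem _)
      have hadj := adjoin_le_submodule (B.w ξ) _ hgen1 hwS hmulS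
      have key : ∀ x, x ∈ X.H d → x ≠ 0 →
          x ∈ Submodule.span (ZMod 2) s → x = B.w ξ d := by
        intro x hxH hx0 hxS
        rw [show s = insert (1 : A) (insert (B.w ξ d) {B.w ξ (d + d)}) from rfl,
          Submodule.mem_span_insert] at hxS
        obtain ⟨a, z, hz, rfl⟩ := hxS
        rw [Submodule.mem_span_insert] at hz
        obtain ⟨b, z', hz', rfl⟩ := hz
        rw [Submodule.mem_span_singleton] at hz'
        obtain ⟨c, rfl⟩ := hz'
        have he : a • (1 : A) + (b • B.w ξ d + c • B.w ξ (d + d)) - b • B.w ξ d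
            = a • (1 : A) + c • B.w ξ (d + d) := by module
        have hy1 : a • (1 : A) + (b • B.w ξ d + c • B.w ξ (d + d)) - b • B.w ξ d
            ∈ X.H d := sub_mem hxH (Submodule.smul_mem _ b (B.w_mem ξ d))
        have hy2 : a • (1 : A) + (b • B.w ξ d + c • B.w ξ (d + d)) - b • B.w ξ d
            ∈ ⨆ (k) (_ : k ≠ d), X.H k := by
          rw [he]
          exact add_mem (memSup d 0 (by omega) _ (Submodule.smul_mem _ a h1H0))
            (memSup d (d + d) (by omega) _ (Submodule.smul_mem _ c (B.w_mem ξ (d + d))))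
        have hz0 := Submodule.disjoint_def.1 (X.indep d) _ hy1 hy2
        rw [sub_eq_zero] at hz0
        rcases hbcase b with rfl | rfl
        · exact absurd (hz0.trans (zero_smul _ _)) hx0
        · rw [hz0, one_smul]
      have hnot : ¬ (IsPolyIn (B.w ξ) u ∧ IsPolyIn (B.w ξ) v) := by
        rintro ⟨hpu, hpv⟩
        have h1 := key u hu hu0 (hadj u hpu)
        have h2' := key v hv hv0 (hadj v hpv)
        exact huvne (h1.trans h2'.symm)
      refine charrank_eq_of X (B.w ξ) (d - 1) ⟨by omega, ?_⟩ ?_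
      · intro j hj x hx
        rcases Nat.eq_zero_or_pos j with rfl | hj0
        · exact poly0 _ x hx
        · rw [Hbot j hj0 (by omega) (by omega) (by omega), Submodule.mem_bot] at hx
          rw [hx]; exact zero_mem _
      · intro k' hk' hp
        by_contra hc
        exact hnot ⟨hp d (by omega) u hu, hp d (by omega) v hv⟩
    exact ucharrank_eq_of X B (d - 1) B.nonempty.some (hwcr _)
      (fun ξ => le_of_eq (hwcr ξ))
end

section
/- For X = S^1 × CP^n, every real vector bundle ξ over X has charrank_X(ξ) ∈ {0, 1, 2n+1}: it is 0 if w_1(ξ) = 0, it is 1 if w_1(ξ) ≠ 0 and w_2(ξ) = 0, and it is 2n+1 if both w_1(ξ) ≠ 0 and w_2(ξ) ≠ 0. Hence ucharrank(X) = 2n + 1, and all three values are realized by bundles over X. -/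
/-! An abstract framework for the mod-2 cohomology ring of a connected finite
CW-complex, Stiefel–Whitney classes of real vector bundles, characteristic rank
and cup-length, following Naolekar–Thakur,
"Note on the characteristic rank of vector bundles". -/

variable (A : Type) [CommRing A] [Algebra (ZMod 2) A]

variable {A}

namespace Aux15

variable {A : Type} [CommRing A] [Algebra (ZMod 2) A]

lemma zmod2_cases (c : ZMod 2) : c = 0 ∨ c = 1 := by revert c; decide

lemma span_singleton_cases (y z : A) (hy : y ∈ Submodule.span (ZMod 2) {z}) :
    y = 0 ∨ y = z := by
  obtain ⟨c, rfl⟩ := Submodule.mem_span_singleton.1 hy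
  rcases zmod2_cases c with rfl | rfl
  · left; simp
  · right; simp

lemma mem_H0 (X : CohomSpace A) {x : A} (hx : x ∈ X.H 0) : x = 0 ∨ x = 1 := by
  rw [X.h0] at hx
  exact span_singleton_cases x 1 hx

lemma one_mem_H0 (X : CohomSpace A) : (1 : A) ∈ X.H 0 := by
  rw [X.h0]; exact Submodule.subset_span rfl

lemma pair_disj (X : CohomSpace A) {i j : ℕ} (hij : i ≠ j) {x : A}
    (hxi : x ∈ X.H i) (hxj : x ∈ X.H j) : x = 0 := by
  have h := X.indep.pairwiseDisjoint hij
  have : x ∈ (⊥ : Submodule (ZMod 2) A) := h.le_bot ⟨hxi, hxj⟩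
  simpa using this

lemma closure_deg (X : CohomSpace A) (w : ℕ → A) (hw : ∀ i, w i ∈ X.H i) :
    ∀ m ∈ Submonoid.closure (Set.range w), ∃ e, m ∈ X.H e := by
  intro m hm
  induction hm using Submonoid.closure_induction with
  | mem x hx => obtain ⟨i, rfl⟩ := hx; exact ⟨i, hw i⟩
  | one => exact ⟨0, one_mem_H0 X⟩
  | mul x y hx hy ihx ihy =>
    obtain ⟨e1, h1⟩ := ihx; obtain ⟨e2, h2⟩ := ihy
    exact ⟨e1 + e2, X.mul_mem h1 h2⟩

/-- Separation: if `x` has pure degree `d` and is a polynomial in the `w i`,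
then `x` is a span of degree-`d` monomials in the `w i`. -/
lemma sep (X : CohomSpace A) (w : ℕ → A)
    (hcl : ∀ m ∈ Submonoid.closure (Set.range w), ∃ e, m ∈ X.H e)
    {d : ℕ} {x : A} (hx : x ∈ X.H d) (hp : IsPolyIn w x) :
    x ∈ Submodule.span (ZMod 2)
      {m | m ∈ Submonoid.closure (Set.range w) ∧ m ∈ X.H d} := by
  set V : Submodule (ZMod 2) A :=
    Submodule.span (ZMod 2) {m | m ∈ Submonoid.closure (Set.range w) ∧ m ∈ X.H d} with hV
  have hVle : V ≤ X.H d := Submodule.span_le.2 (fun m hm => hm.2)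
  have hx' : x ∈ Submodule.span (ZMod 2) ((Submonoid.closure (Set.range w) : Set A)) := by
    rw [← Algebra.adjoin_eq_span]; exact hp
  have hle : Submodule.span (ZMod 2) ((Submonoid.closure (Set.range w) : Set A))
      ≤ V ⊔ ⨆ j, ⨆ (_ : j ≠ d), X.H j := by
    apply Submodule.span_le.2
    intro m hm
    obtain ⟨e, he⟩ := hcl m hm
    by_cases hmd : m ∈ X.H d
    · exact Submodule.mem_sup_left (Submodule.subset_span ⟨hm, hmd⟩)
    · have hed : e ≠ d := fun h => hmd (h ▸ he)
      exact Submodule.mem_sup_right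
        (Submodule.mem_iSup_of_mem e (Submodule.mem_iSup_of_mem hed he))
  obtain ⟨v, hv, z, hz, hvz⟩ := Submodule.mem_sup.1 (hle hx')
  have hxv : x - v ∈ X.H d := Submodule.sub_mem _ hx (hVle hv)
  have hxz : x - v ∈ ⨆ j, ⨆ (_ : j ≠ d), X.H j := by
    have : x - v = z := by rw [← hvz]; ring
    rw [this]; exact hz
  have hzero : x - v = 0 := by
    have := (X.indep d).le_bot ⟨hxv, hxz⟩
    simpa using this
  have : x = v := by
    have := sub_eq_zero.mp hzero; exact this
  rw [this]; exact hv

/-- Degree ≤ 2 structure of monomials in the `w i`. -/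
lemma closure_low (X : CohomSpace A) (w : ℕ → A) (hw : ∀ i, w i ∈ X.H i)
    (h10 : (1 : A) ≠ 0) :
    ∀ m ∈ Submonoid.closure (Set.range w),
      (∃ e, m ∈ X.H e) ∧ (m ≠ 0 → m ∈ X.H 1 → m = w 1) ∧
      (m ≠ 0 → m ∈ X.H 2 → m = w 2 ∨ m = w 1 * w 1) := by
  intro m hm
  induction hm using Submonoid.closure_induction with
  | mem x hx =>
    obtain ⟨i, rfl⟩ := hx
    refine ⟨⟨i, hw i⟩, fun hne h1 => ?_, fun hne h2 => ?_⟩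
    · rcases eq_or_ne i 1 with rfl | hi
      · rfl
      · exact absurd (pair_disj X hi (hw i) h1) hne
    · rcases eq_or_ne i 2 with rfl | hi
      · exact Or.inl rfl
      · exact absurd (pair_disj X hi (hw i) h2) hne
  | one =>
    refine ⟨⟨0, one_mem_H0 X⟩, fun hne h1 => ?_, fun hne h2 => ?_⟩
    · exact absurd (pair_disj X (by norm_num : (0:ℕ) ≠ 1) (one_mem_H0 X) h1) h10
    · exact absurd (pair_disj X (by norm_num : (0:ℕ) ≠ 2) (one_mem_H0 X) h2) h10
  | mul x y hx hy ihx ihy =>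
    obtain ⟨⟨e1, h1⟩, p1, q1⟩ := ihx
    obtain ⟨⟨e2, h2⟩, p2, q2⟩ := ihy
    have hmm : x * y ∈ X.H (e1 + e2) := X.mul_mem h1 h2
    refine ⟨⟨e1 + e2, hmm⟩, fun hne hm1 => ?_, fun hne hm2 => ?_⟩
    · have hxne : x ≠ 0 := fun h => hne (by simp [h])
      have hyne : y ≠ 0 := fun h => hne (by simp [h])
      rcases eq_or_ne (e1 + e2) 1 with hsum | hsum
      · have hc : (e1 = 0 ∧ e2 = 1) ∨ (e1 = 1 ∧ e2 = 0) := by omega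
        rcases hc with ⟨he1, he2⟩ | ⟨he1, he2⟩
        · subst he1
          rcases mem_H0 X h1 with rfl | rfl
          · exact absurd (zero_mul y) hne
          · rw [one_mul] at hm1 ⊢; exact p2 hyne hm1
        · subst he2
          rcases mem_H0 X h2 with rfl | rfl
          · exact absurd (mul_zero x) hne
          · rw [mul_one] at hm1 ⊢; exact p1 hxne hm1
      · exact absurd (pair_disj X hsum hmm hm1) hne
    · have hxne : x ≠ 0 := fun h => hne (by simp [h])
      have hyne : y ≠ 0 := fun h => hne (by simp [h])
      rcases eq_or_ne (e1 + e2) 2 with hsum | hsum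
      · have hc : (e1 = 0 ∧ e2 = 2) ∨ (e1 = 2 ∧ e2 = 0) ∨ (e1 = 1 ∧ e2 = 1) := by omega
        rcases hc with ⟨he1, he2⟩ | ⟨he1, he2⟩ | ⟨he1, he2⟩
        · subst he1
          rcases mem_H0 X h1 with rfl | rfl
          · exact absurd (zero_mul y) hne
          · rw [one_mul] at hm2 ⊢; exact q2 hyne hm2
        · subst he2
          rcases mem_H0 X h2 with rfl | rfl
          · exact absurd (mul_zero x) hne
          · rw [mul_one] at hm2 ⊢; exact q1 hxne hm2
        · subst he1; subst he2
          have hx1 : x = w 1 := p1 hxne h1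
          have hy1 : y = w 1 := p2 hyne h2
          exact Or.inr (by rw [hx1, hy1])
      · exact absurd (pair_disj X hsum hmm hm2) hne

lemma not_poly_deg1 (X : CohomSpace A) (w : ℕ → A) (hw : ∀ i, w i ∈ X.H i)
    (h10 : (1 : A) ≠ 0) {x : A} (hx1 : x ∈ X.H 1) (hxne : x ≠ 0)
    (hw1 : w 1 = 0) : ¬ IsPolyIn w x := by
  intro hp
  have hs := sep X w (closure_deg X w hw) hx1 hp
  have hle : Submodule.span (ZMod 2)
      {m | m ∈ Submonoid.closure (Set.range w) ∧ m ∈ X.H 1} ≤ ⊥ := by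
    apply Submodule.span_le.2
    rintro m ⟨hm, hm1⟩
    by_cases hmz : m = 0
    · simp [hmz]
    · have := (closure_low X w hw h10 m hm).2.1 hmz hm1
      simp [this, hw1]
  exact hxne (by simpa using hle hs)

lemma not_poly_deg2 (X : CohomSpace A) (w : ℕ → A) (hw : ∀ i, w i ∈ X.H i)
    (h10 : (1 : A) ≠ 0) {x : A} (hx2 : x ∈ X.H 2) (hxne : x ≠ 0)
    (hw2 : w 2 = 0) (hsq : w 1 * w 1 = 0) : ¬ IsPolyIn w x := by
  intro hp
  have hs := sep X w (closure_deg X w hw) hx2 hp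
  have hle : Submodule.span (ZMod 2)
      {m | m ∈ Submonoid.closure (Set.range w) ∧ m ∈ X.H 2} ≤ ⊥ := by
    apply Submodule.span_le.2
    rintro m ⟨hm, hm2⟩
    by_cases hmz : m = 0
    · simp [hmz]
    · rcases (closure_low X w hw h10 m hm).2.2 hmz hm2 with h | h
      · simp [h, hw2]
      · simp [h, hsq]
  exact hxne (by simpa using hle hs)

lemma zero_mem_crSet (X : CohomSpace A) (w : ℕ → A) :
    0 ∈ {k | k ≤ X.dim ∧ ∀ j ≤ k, ∀ x ∈ X.H j, IsPolyIn w x} := by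
  refine ⟨Nat.zero_le _, fun j hj x hx => ?_⟩
  obtain rfl : j = 0 := Nat.le_zero.mp hj
  rcases mem_H0 X hx with rfl | rfl
  · exact Subalgebra.zero_mem _
  · exact Subalgebra.one_mem _

lemma charrank_le_dim (X : CohomSpace A) (w : ℕ → A) : charrank X w ≤ X.dim :=
  csSup_le ⟨0, zero_mem_crSet X w⟩ (fun _ hk => hk.1)

lemma charrank_eq (X : CohomSpace A) (w : ℕ → A) (r : ℕ)
    (hmem : r ∈ {k | k ≤ X.dim ∧ ∀ j ≤ k, ∀ x ∈ X.H j, IsPolyIn w x})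
    (hub : ∀ k ∈ {k | k ≤ X.dim ∧ ∀ j ≤ k, ∀ x ∈ X.H j, IsPolyIn w x}, k ≤ r) :
    charrank X w = r :=
  le_antisymm (csSup_le ⟨r, hmem⟩ hub)
    (le_csSup ⟨X.dim, fun _ hk => hk.1⟩ hmem)

end Aux15

/-- Theorem 1.7(2): over `X = S^1 × CP^n`, every bundle has
characteristic rank `0`, `1`, or `2n+1`, determined by `w_1` and `w_2`; all
three values occur, and `ucharrank X = 2n + 1`. -/
theorem statement15 {A : Type} [CommRing A] [Algebra (ZMod 2) A]
    (n : ℕ) (hn : 1 ≤ n)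
    -- `X = S^1 × CP^n`, with `H^*(X) = Z/2[a,b]/(a², b^{n+1})`
    (X : CohomSpace A) (hdim : X.dim = 2 * n + 1)
    (a b : A) (ha : a ∈ X.H 1) (hb : b ∈ X.H 2)
    (ha2 : a * a = 0) (hbpow : b ^ (n + 1) = 0)
    (hmono : ∀ ε k : ℕ, ε ≤ 1 → k ≤ n → a ^ ε * b ^ k ≠ 0)
    (hH : ∀ j, 0 < j → X.H j = Submodule.span (ZMod 2)
      {x | ∃ ε k, ε ≤ 1 ∧ k ≤ n ∧ ε + 2 * k = j ∧ x = a ^ ε * b ^ k})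
    (B : BundleTheory X)
    -- pullback of the canonical line bundle over `S^1 = RP^1`
    (hγ : ∃ ξ : B.VB, B.w ξ 1 = a ∧ B.w ξ 2 = 0)
    -- pullback of the realified canonical complex line bundle over `CP^n`
    (hη : ∃ ξ : B.VB, B.w ξ 1 = 0 ∧ B.w ξ 2 = b)
    -- their Whitney sum
    (hγη : ∃ ξ : B.VB, B.w ξ 1 = a ∧ B.w ξ 2 = b) :
    (∀ ξ : B.VB,
      (B.w ξ 1 = 0 → charrank X (B.w ξ) = 0) ∧
      (B.w ξ 1 ≠ 0 → B.w ξ 2 = 0 → charrank X (B.w ξ) = 1) ∧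
      (B.w ξ 1 ≠ 0 → B.w ξ 2 ≠ 0 → charrank X (B.w ξ) = 2 * n + 1)) ∧
    ucharrank X B = 2 * n + 1 ∧
    (∃ ξ : B.VB, charrank X (B.w ξ) = 0) ∧
    (∃ ξ : B.VB, charrank X (B.w ξ) = 1) ∧
    (∃ ξ : B.VB, charrank X (B.w ξ) = 2 * n + 1) := by
  classical
  open Aux15 in
  -- basic nonvanishing facts
  have h10 : (1 : A) ≠ 0 := by simpa using hmono 0 0 (by norm_num) (Nat.zero_le n)
  have ha_ne : a ≠ 0 := by simpa using hmono 1 0 le_rfl (Nat.zero_le n)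
  have hb_ne : b ≠ 0 := by simpa using hmono 0 1 (by norm_num) hn
  -- H^1 and H^2
  have hset1 : {x : A | ∃ ε k, ε ≤ 1 ∧ k ≤ n ∧ ε + 2 * k = 1 ∧ x = a ^ ε * b ^ k}
      = {a} := by
    ext x
    constructor
    · rintro ⟨ε, k, hε, hk, hεk, rfl⟩
      obtain ⟨rfl, rfl⟩ : ε = 1 ∧ k = 0 := by omega
      simp
    · rintro rfl
      exact ⟨1, 0, le_rfl, Nat.zero_le n, by norm_num, by simp⟩
  have hset2 : {x : A | ∃ ε k, ε ≤ 1 ∧ k ≤ n ∧ ε + 2 * k = 2 ∧ x = a ^ ε * b ^ k}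
      = {b} := by
    ext x
    constructor
    · rintro ⟨ε, k, hε, hk, hεk, rfl⟩
      obtain ⟨rfl, rfl⟩ : ε = 0 ∧ k = 1 := by omega
      simp
    · rintro rfl
      exact ⟨0, 1, by norm_num, hn, by norm_num, by simp⟩
  have hH1 : X.H 1 = Submodule.span (ZMod 2) {a} := by
    rw [hH 1 one_pos, hset1]
  have hH2 : X.H 2 = Submodule.span (ZMod 2) {b} := by
    rw [hH 2 two_pos, hset2]
  -- the key pointwise statement
  have key : ∀ ξ : B.VB,
      (B.w ξ 1 = 0 → charrank X (B.w ξ) = 0) ∧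
      (B.w ξ 1 ≠ 0 → B.w ξ 2 = 0 → charrank X (B.w ξ) = 1) ∧
      (B.w ξ 1 ≠ 0 → B.w ξ 2 ≠ 0 → charrank X (B.w ξ) = 2 * n + 1) := by
    intro ξ
    have hw := B.w_mem ξ
    have hw1c : B.w ξ 1 = 0 ∨ B.w ξ 1 = a :=
      span_singleton_cases _ _ (hH1 ▸ hw 1)
    have hw2c : B.w ξ 2 = 0 ∨ B.w ξ 2 = b :=
      span_singleton_cases _ _ (hH2 ▸ hw 2)
    refine ⟨?_, ?_, ?_⟩
    · -- w1 = 0 : charrank 0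
      intro hw1
      refine Nat.le_zero.mp (csSup_le ⟨0, zero_mem_crSet X (B.w ξ)⟩ ?_)
      intro k hk
      by_contra hk0
      exact not_poly_deg1 X (B.w ξ) hw h10 ((hH1).symm ▸ Submodule.subset_span rfl)
        ha_ne hw1 (hk.2 1 (by omega) a ((hH1).symm ▸ Submodule.subset_span rfl))
    · -- w1 ≠ 0, w2 = 0 : charrank 1
      intro hw1ne hw2
      have hw1 : B.w ξ 1 = a := hw1c.resolve_left hw1ne
      have hsq : B.w ξ 1 * B.w ξ 1 = 0 := by rw [hw1]; exact ha2
      refine charrank_eq X (B.w ξ) 1 ⟨by omega, ?_⟩ ?_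
      · intro j hj x hx
        interval_cases j
        · rcases mem_H0 X hx with rfl | rfl
          · exact Subalgebra.zero_mem _
          · exact Subalgebra.one_mem _
        · rw [hH1] at hx
          rcases span_singleton_cases _ _ hx with rfl | rfl
          · exact Subalgebra.zero_mem _
          · exact Algebra.subset_adjoin ⟨1, hw1⟩
      · intro k hk
        by_contra hk1
        exact not_poly_deg2 X (B.w ξ) hw h10 hb hb_ne hw2 hsq
          (hk.2 2 (by omega) b hb)
    · -- w1 ≠ 0, w2 ≠ 0 : charrank 2n+1
      intro hw1ne hw2ne
      have hw1 : B.w ξ 1 = a := hw1c.resolve_left hw1ne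
      have hw2 : B.w ξ 2 = b := hw2c.resolve_left hw2ne
      refine charrank_eq X (B.w ξ) (2 * n + 1) ⟨by omega, ?_⟩
        (fun k hk => by have := hk.1; omega)
      intro j hj x hx
      rcases Nat.eq_zero_or_pos j with rfl | hj0
      · rcases mem_H0 X hx with rfl | rfl
        · exact Subalgebra.zero_mem _
        · exact Subalgebra.one_mem _
      · rw [hH j hj0] at hx
        have hgen : {x : A | ∃ ε k, ε ≤ 1 ∧ k ≤ n ∧ ε + 2 * k = j ∧ x = a ^ ε * b ^ k}
            ⊆ (Subalgebra.toSubmodule (Algebra.adjoin (ZMod 2) (Set.range (B.w ξ))) : Set A) := by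
          rintro y ⟨ε, k, hε, hk, hεk, rfl⟩
          have haa : a ∈ Algebra.adjoin (ZMod 2) (Set.range (B.w ξ)) :=
            Algebra.subset_adjoin ⟨1, hw1⟩
          have hbb : b ∈ Algebra.adjoin (ZMod 2) (Set.range (B.w ξ)) :=
            Algebra.subset_adjoin ⟨2, hw2⟩
          exact Subalgebra.mul_mem _ (Subalgebra.pow_mem _ haa ε) (Subalgebra.pow_mem _ hbb k)
        exact (Submodule.span_le.2 hgen) hx
  refine ⟨key, ?_, ?_, ?_, ?_⟩
  · -- ucharrank
    have hub : ∀ ξ : B.VB, charrank X (B.w ξ) ≤ 2 * n + 1 := fun ξ => by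
      have := charrank_le_dim X (B.w ξ); omega
    obtain ⟨ξ, h1, h2⟩ := hγη
    have hval : charrank X (B.w ξ) = 2 * n + 1 :=
      (key ξ).2.2 (h1 ▸ ha_ne) (h2 ▸ hb_ne)
    refine le_antisymm ?_ ?_
    · haveI := B.nonempty
      exact csSup_le (Set.range_nonempty _) (by rintro _ ⟨ξ', rfl⟩; exact hub ξ')
    · exact le_csSup ⟨2 * n + 1, by rintro _ ⟨ξ', rfl⟩; exact hub ξ'⟩ ⟨ξ, hval⟩
  · obtain ⟨ξ, h1, h2⟩ := hη
    exact ⟨ξ, (key ξ).1 h1⟩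
  · obtain ⟨ξ, h1, h2⟩ := hγ
    exact ⟨ξ, (key ξ).2.1 (h1 ▸ ha_ne) h2⟩
  · obtain ⟨ξ, h1, h2⟩ := hγη
    exact ⟨ξ, (key ξ).2.2 (h1 ▸ ha_ne) (h2 ▸ hb_ne)⟩
end

section
/- For the Dold manifold X = P(m,n), every real vector bundle ξ over X has charrank_X(ξ) ∈ {0, 1, 2n+m}, and ucharrank(P(m,n)) = 2n + m. -/
/-! An abstract framework for the mod-2 cohomology ring of a connected finite
CW-complex, Stiefel–Whitney classes of real vector bundles, characteristic rank
and cup-length, following Naolekar–Thakur,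
"Note on the characteristic rank of vector bundles". -/

variable (A : Type) [CommRing A] [Algebra (ZMod 2) A]

variable {A}

/-- Theorem 1.7(3): over the Dold manifold `X = P(m,n)`,
every bundle has characteristic rank `0`, `1`, or `2n+m`, and
`ucharrank (P(m,n)) = 2n + m`. -/
theorem statement16 {A : Type} [CommRing A] [Algebra (ZMod 2) A]
    (m n : ℕ) (hm : 1 ≤ m) (hn : 1 ≤ n)
    -- `X = P(m,n)`, with `H^*(X) = Z/2[c,d]/(c^{m+1}, d^{n+1})`
    (X : CohomSpace A) (hdim : X.dim = 2 * n + m)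
    (c d : A) (hc : c ∈ X.H 1) (hd : d ∈ X.H 2)
    (hcpow : c ^ (m + 1) = 0) (hdpow : d ^ (n + 1) = 0)
    (hindep : LinearIndependent (ZMod 2)
      (fun p : {p : ℕ × ℕ // p.1 ≤ m ∧ p.2 ≤ n} => c ^ p.val.1 * d ^ p.val.2))
    (hH : ∀ j, 0 < j → X.H j = Submodule.span (ZMod 2)
      {x | ∃ i k, i ≤ m ∧ k ≤ n ∧ i + 2 * k = j ∧ x = c ^ i * d ^ k})
    (B : BundleTheory X)
    -- Stong: a line bundle with `w = 1 + c` and a 2-plane bundle with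
    -- `w = 1 + c + d`
    (hline : ∃ ξ : B.VB, B.w ξ 1 = c ∧ B.w ξ 2 = 0)
    (hplane : ∃ ξ : B.VB, B.w ξ 1 = c ∧ B.w ξ 2 = d) :
    (∀ ξ : B.VB, charrank X (B.w ξ) ∈ ({0, 1, 2 * n + m} : Set ℕ)) ∧
    ucharrank X B = 2 * n + m := by
  
  classical
  set S : B.VB → Subalgebra (ZMod 2) A :=
    fun ξ => Algebra.adjoin (ZMod 2) (Set.range (B.w ξ)) with hS
  set K : B.VB → Set ℕ :=
    fun ξ => {k | k ≤ X.dim ∧ ∀ j ≤ k, ∀ x ∈ X.H j, IsPolyIn (B.w ξ) x} with hK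
  have hcr : ∀ ξ, charrank X (B.w ξ) = sSup (K ξ) := fun ξ => rfl
  have h0mem : ∀ ξ : B.VB, ∀ x ∈ X.H 0, IsPolyIn (B.w ξ) x := by
    intro ξ x hx
    rw [X.h0, Submodule.mem_span_singleton] at hx
    obtain ⟨a, rfl⟩ := hx
    exact Subalgebra.smul_mem _ (one_mem _) a
  have hzero : ∀ ξ : B.VB, 0 ∈ K ξ := by
    intro ξ
    refine ⟨Nat.zero_le _, ?_⟩
    intro j hj x hx
    interval_cases j
    exact h0mem ξ x hx
  have hbdd : ∀ ξ : B.VB, BddAbove (K ξ) := fun ξ => ⟨X.dim, fun k hk => hk.1⟩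
  have hle : ∀ ξ : B.VB, charrank X (B.w ξ) ≤ X.dim := by
    intro ξ
    rw [hcr]
    exact csSup_le ⟨0, hzero ξ⟩ fun k hk => hk.1
  have hdim1 : 1 ≤ X.dim := by rw [hdim]; omega
  -- case: c ∉ S ξ
  have crank0 : ∀ ξ : B.VB, c ∉ S ξ → charrank X (B.w ξ) = 0 := by
    intro ξ hcS
    rw [hcr]
    have : sSup (K ξ) ≤ 0 := by
      refine csSup_le ⟨0, hzero ξ⟩ fun k hk => ?_
      by_contra hk0
      exact hcS (hk.2 1 (by omega) c hc)
    omega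
  -- case: c ∈ S ξ, d ∉ S ξ
  have crank1 : ∀ ξ : B.VB, c ∈ S ξ → d ∉ S ξ → charrank X (B.w ξ) = 1 := by
    intro ξ hcS hdS
    have h1 : (1 : ℕ) ∈ K ξ := by
      refine ⟨hdim1, ?_⟩
      intro j hj x hx
      interval_cases j
      · exact h0mem ξ x hx
      · rw [hH 1 one_pos] at hx
        refine (Subalgebra.mem_toSubmodule (S ξ)).mp (Submodule.span_le.mpr (by
          rintro y ⟨i, k, hi, hk, hik, rfl⟩
          have hk0 : k = 0 := by omega
          have hi1 : i = 1 := by omega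
          subst hk0; subst hi1
          exact (Subalgebra.mem_toSubmodule (S ξ)).mpr (by simpa using pow_mem hcS 1)) hx)
    rw [hcr]
    refine le_antisymm (csSup_le ⟨0, hzero ξ⟩ fun k hk => ?_) (le_csSup (hbdd ξ) h1)
    by_contra hk1
    exact hdS (hk.2 2 (by omega) d hd)
  -- case: c, d ∈ S ξ
  have crankdim : ∀ ξ : B.VB, c ∈ S ξ → d ∈ S ξ → charrank X (B.w ξ) = X.dim := by
    intro ξ hcS hdS
    have hdmem : X.dim ∈ K ξ := by
      refine ⟨le_rfl, ?_⟩
      intro j hj x hx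
      rcases Nat.eq_zero_or_pos j with hj0 | hj0
      · subst hj0; exact h0mem ξ x hx
      · rw [hH j hj0] at hx
        refine (Subalgebra.mem_toSubmodule (S ξ)).mp (Submodule.span_le.mpr ?_ hx)
        rintro y ⟨i, k, hi, hk, hik, rfl⟩
        exact (Subalgebra.mem_toSubmodule (S ξ)).mpr (mul_mem (pow_mem hcS i) (pow_mem hdS k))
    rw [hcr]
    exact le_antisymm (csSup_le ⟨0, hzero ξ⟩ fun k hk => hk.1) (le_csSup (hbdd ξ) hdmem)
  constructor
  · intro ξ
    by_cases hcS : c ∈ S ξ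
    · by_cases hdS : d ∈ S ξ
      · right; right
        rw [crankdim ξ hcS hdS, hdim]; rfl
      · right; left
        exact crank1 ξ hcS hdS
    · left
      exact crank0 ξ hcS
  · obtain ⟨ξ₀, hw1, hw2⟩ := hplane
    have hcS : c ∈ S ξ₀ := hw1 ▸ Algebra.subset_adjoin ⟨1, rfl⟩
    have hdS : d ∈ S ξ₀ := hw2 ▸ Algebra.subset_adjoin ⟨2, rfl⟩
    have hξ₀ : charrank X (B.w ξ₀) = X.dim := crankdim ξ₀ hcS hdS
    rw [← hdim]
    unfold ucharrank
    refine le_antisymm (csSup_le ⟨_, ⟨ξ₀, rfl⟩⟩ ?_) ?_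
    · rintro k ⟨ξ, rfl⟩
      exact hle ξ
    · calc X.dim = charrank X (B.w ξ₀) := hξ₀.symm
        _ ≤ sSup (Set.range fun ξ : B.VB => charrank X (B.w ξ)) :=
          le_csSup ⟨X.dim, by rintro k ⟨ξ, rfl⟩; exact hle ξ⟩ ⟨ξ₀, rfl⟩
end
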